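/- arXiv:math/0308223 — 7 statements merged into one kernel-verified Lean document; each statement's English description precedes it below -/
import Mathlib

section
/- Let 𝓜 : ℝ^m → ℝ^m be a Σ∆ map with input x ∈ ℝ. Suppose Γ₀ ⊆ ℝ^m is a bounded set with 𝓜(Γ₀) ⊆ Γ₀, and define Γ = ⋂_{k ≥ 0} 𝓜^k(Γ₀). Then 𝓜(Γ) = Γ. -/
/-!
A Σ∆ map is affine with invertible linear part `L` on each of the finitely many pieces of its
partition, so it is injective on each piece and all its fibres are finite. For a map `f` with
finite fibres and a decreasing sequence `S k`, a point `y` lying in every `f(S k)` has a preimage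
in every `S k`; by pigeonhole one of its finitely many preimages lies in infinitely many, hence
all, of the `S k`. So `f(⋂ S k) = ⋂ f(S k)`, and for the decreasing sequence `S k = 𝓜^k(Γ₀)`
this gives `𝓜(Γ) = ⋂ 𝓜^(k+1)(Γ₀) = Γ`.
-/

open MeasureTheory

noncomputable section

/-- The m×m lower-triangular matrix of ones: `L i j = 1` iff `j ≤ i`. -/
def Lmat (m : ℕ) : Matrix (Fin m) (Fin m) ℝ :=
  fun i j => if j ≤ i then 1 else 0

/-- A Σ∆ map with input `x`: a piecewise affine map `v ↦ L v + x 𝟏 + d_i` on a finite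
partition `Ω_1, …, Ω_K` of `ℝ^m`, with integer translation vectors `d_i`. -/
def IsSigmaDeltaMap (m : ℕ) (x : ℝ) (M : (Fin m → ℝ) → (Fin m → ℝ)) : Prop :=
  ∃ (K : ℕ) (Ω : Fin K → Set (Fin m → ℝ)) (d : Fin K → (Fin m → ℤ)),
    (∀ v, ∃! i, v ∈ Ω i) ∧
    ∀ i, ∀ v ∈ Ω i, M v = (Lmat m).mulVec v + (fun _ => x) + (fun j => (d i j : ℝ))

theorem Set.finite_preimage_singleton_of_injOn_cover {α β ι : Type*} [Finite ι] {f : α → β}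
    {Ω : ι → Set α} (hcover : ∀ a, ∃ i, a ∈ Ω i) (hinj : ∀ i, Set.InjOn f (Ω i)) (b : β) :
    (f ⁻¹' {b}).Finite := by
  have hfiber : f ⁻¹' {b} = ⋃ i, Ω i ∩ f ⁻¹' {b} := by
    ext a
    simpa using fun _ => hcover a
  rw [hfiber]
  exact Set.finite_iUnion fun i =>
    Set.Subsingleton.finite fun a ha a' ha' => hinj i ha.1 ha'.1 (ha.2.trans ha'.2.symm)

theorem Set.image_iInter_of_antitone_of_finite_fibers {α β : Type*} {f : α → β}
    (hf : ∀ b, (f ⁻¹' {b}).Finite) {S : ℕ → Set α} (hS : Antitone S) :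
    f '' ⋂ n, S n = ⋂ n, f '' S n := by
  refine (Set.image_iInter_subset S f).antisymm fun b hb => ?_
  choose a haS hab using Set.mem_iInter.mp hb
  have : Finite (f ⁻¹' {b}) := hf b
  obtain ⟨⟨a₀, ha₀⟩, hinf⟩ :=
    Finite.exists_infinite_fiber fun n => (⟨a n, hab n⟩ : f ⁻¹' {b})
  refine ⟨a₀, Set.mem_iInter.mpr fun k => ?_, ha₀⟩
  obtain ⟨n, hn, hkn⟩ := (Set.infinite_coe_iff.mp hinf).exists_gt k
  have hna : a n = a₀ := congrArg Subtype.val hn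
  exact hS hkn.le (hna ▸ haS n)

theorem Lmat_mulVec_injective (m : ℕ) : Function.Injective (Lmat m).mulVec := by
  have hlower : (Lmat m).IsLowerTriangular := fun i j hij => if_neg (not_le.mpr hij)
  rw [Matrix.mulVec_injective_iff_isUnit, Matrix.isUnit_iff_isUnit_det,
    Matrix.det_of_isLowerTriangular _ hlower]
  simp [Lmat]

theorem IsSigmaDeltaMap.finite_preimage_singleton {m : ℕ} {x : ℝ}
    {M : (Fin m → ℝ) → (Fin m → ℝ)} (hM : IsSigmaDeltaMap m x M) (y : Fin m → ℝ) :
    (M ⁻¹' {y}).Finite := by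
  obtain ⟨K, Ω, d, hpart, hform⟩ := hM
  refine Set.finite_preimage_singleton_of_injOn_cover (fun v => (hpart v).exists)
    (fun i v hv w hw hvw => Lmat_mulVec_injective m ?_) y
  rw [hform i v hv, hform i w hw] at hvw
  exact add_right_cancel (add_right_cancel hvw)

theorem antitone_image_iterate {α : Type*} {f : α → α} {s : Set α} (hs : f '' s ⊆ s) :
    Antitone fun k => f^[k] '' s :=
  antitone_nat_of_succ_le fun k => by
    rw [Function.iterate_succ, Set.image_comp]
    exact Set.image_mono hs

theorem sigma_delta_invariant_set_general (m : ℕ) (x : ℝ)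
    (M : (Fin m → ℝ) → (Fin m → ℝ)) (hM : IsSigmaDeltaMap m x M)
    (Γ₀ : Set (Fin m → ℝ))
    (hinv : M '' Γ₀ ⊆ Γ₀) :
    M '' (⋂ k : ℕ, M^[k] '' Γ₀) = ⋂ k : ℕ, M^[k] '' Γ₀ := by
  have hanti := antitone_image_iterate hinv
  calc M '' ⋂ k, M^[k] '' Γ₀
      = ⋂ k, M '' (M^[k] '' Γ₀) :=
        Set.image_iInter_of_antitone_of_finite_fibers hM.finite_preimage_singleton hanti
    _ = ⋂ k, M^[k + 1] '' Γ₀ := by simp only [Function.iterate_succ', Set.image_comp]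
    _ = ⋂ k, M^[k] '' Γ₀ := hanti.iInter_nat_add 1

/-- if `Γ₀` is bounded and positively invariant under a Σ∆ map `M`, then
`Γ = ⋂_{k ≥ 0} M^k(Γ₀)` satisfies `M(Γ) = Γ`. -/
theorem sigma_delta_invariant_set (m : ℕ) (hm : 1 ≤ m) (x : ℝ)
    (M : (Fin m → ℝ) → (Fin m → ℝ)) (hM : IsSigmaDeltaMap m x M)
    (Γ₀ : Set (Fin m → ℝ)) (hbdd : Bornology.IsBounded Γ₀)
    (hinv : M '' Γ₀ ⊆ Γ₀) :
    M '' (⋂ k : ℕ, M^[k] '' Γ₀) = ⋂ k : ℕ, M^[k] '' Γ₀ :=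
  sigma_delta_invariant_set_general m x M hM Γ₀ hinv
end
end

section
/- Let 𝓜 : ℝ^m → ℝ^m be a Σ∆ map with input x ∈ ℝ. Suppose Γ₀ ⊆ ℝ^m is a bounded set with 𝓜(Γ₀) ⊆ Γ₀, and define Γ = ⋂_{k ≥ 0} 𝓜^k(Γ₀). If Γ₀ contains a ℤ^m-tile, then Γ contains a ℤ^m-tile. -/
open MeasureTheory

noncomputable section

/-- `S ⊆ ℝ^m` is a `ℤ^m`-tile: its integer translates partition `ℝ^m`, i.e. every point
lies in exactly one translate `S + k`, `k ∈ ℤ^m`. -/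
def IsTile (m : ℕ) (S : Set (Fin m → ℝ)) : Prop :=
  ∀ v : Fin m → ℝ, ∃! k : Fin m → ℤ, (v - fun j => (k j : ℝ)) ∈ S

/-!
Modulo `ℤ^m` a Σ∆ map is the affine bijection `v ↦ L v + x𝟏`, because `L` is unimodular with
integer entries. Hence, if a set meets every coset of `ℤ^m`, so does its image, and by invariance
the iterates `M^k(Γ₀)` form a decreasing sequence of sets each meeting every coset. Since `Γ₀` is
bounded it meets each coset in finitely many points, so these finite nonempty traces decrease and
have a common point: `Γ` meets every coset, and choosing one point of `Γ` in each coset gives a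
tile.
-/

open Function Set

theorem Set.Finite.nonempty_iInter_of_antitone {α : Type*} {A : ℕ → Set α} (hA : Antitone A)
    (hne : ∀ n, (A n).Nonempty) (hfin : (A 0).Finite) : (⋂ n, A n).Nonempty := by
  let _ : TopologicalSpace α := ⊥
  have : DiscreteTopology α := ⟨rfl⟩
  have hAfin n : (A n).Finite := hfin.subset (hA (Nat.zero_le n))
  exact IsCompact.nonempty_iInter_of_directed_nonempty_isCompact_isClosed A hA.directed_ge hne
    (fun n => (hAfin n).isCompact) fun n => isClosed_discrete _

theorem Set.image_iterate_antitone {α : Type*} {f : α → α} {s : Set α} (hs : f '' s ⊆ s) :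
    Antitone fun n => f^[n] '' s := by
  refine antitone_nat_of_succ_le fun n => ?_
  rw [iterate_succ, image_comp]
  exact image_mono hs

theorem exists_subset_forall_existsUnique_sub_mem {G H : Type*} [AddCommGroup G] [AddGroup H]
    {f : H →+ G} (hf : Injective f) {S : Set G} (hS : ∀ v, ∃ k, v - f k ∈ S) :
    ∃ T ⊆ S, ∀ v, ∃! k, v - f k ∈ T := by
  choose c hc using hS
  let rep : G ⧸ f.range → G := fun q => q.out - f (c q.out)
  have mk_rep q : (rep q : G ⧸ f.range) = q := by
    rw [← q.out_eq', QuotientAddGroup.eq]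
    simp [rep]
  have rep_mk (v : G) : ∃ k, v - f k = rep v := by
    obtain ⟨k, hk⟩ : -v + rep v ∈ f.range := QuotientAddGroup.eq.1 (mk_rep v).symm
    exact ⟨-k, by rw [map_neg, hk]; abel⟩
  refine ⟨range rep, range_subset_iff.2 fun q => hc _, fun v => ?_⟩
  obtain ⟨k, hk⟩ := rep_mk v
  refine ⟨k, ⟨v, hk.symm⟩, ?_⟩
  rintro k' ⟨q, hq⟩
  have hqv : q = v := by
    rw [← mk_rep q, hq, QuotientAddGroup.eq]
    exact ⟨k', by simp⟩
  subst hqv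
  exact hf (by simpa using (hk.trans hq).symm)

theorem finite_setOf_sub_intCast_mem {m : ℕ} {Γ : Set (Fin m → ℝ)}
    (hΓ : Bornology.IsBounded Γ) (v : Fin m → ℝ) :
    {k : Fin m → ℤ | (v - fun j => (k j : ℝ)) ∈ Γ}.Finite := by
  have hiso : Isometry fun k : Fin m → ℤ => v - fun j => (k j : ℝ) :=
    (IsometryEquiv.subLeft v).isometry.comp Real.isometry_intCast.postcomp_pi
  have hbdd := hiso.antilipschitz.isBounded_preimage hΓ
  exact (Metric.isCompact_of_isClosed_isBounded (isClosed_discrete _) hbdd).finite_of_discrete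

theorem Lmat_det (m : ℕ) : (Lmat m).det = 1 := by
  rw [Matrix.det_of_isLowerTriangular]
  · simp [Lmat]
  · intro i j h
    simpa [Lmat] using h

theorem Lmat_mulVec_intCast (m : ℕ) (k : Fin m → ℤ) :
    ∃ k' : Fin m → ℤ, (Lmat m).mulVec (fun j => (k j : ℝ)) = fun j => (k' j : ℝ) :=
  ⟨fun i => ∑ j, if j ≤ i then k j else 0, by
    funext i
    simp [Matrix.mulVec, Lmat, dotProduct, ite_mul, apply_ite (Int.cast : ℤ → ℝ)]⟩

theorem IsSigmaDeltaMap.exists_sub_intCast_mem_image {m : ℕ} {x : ℝ}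
    {M : (Fin m → ℝ) → (Fin m → ℝ)} (hM : IsSigmaDeltaMap m x M) {S : Set (Fin m → ℝ)}
    (hS : ∀ v, ∃ k : Fin m → ℤ, (v - fun j => (k j : ℝ)) ∈ S) (v : Fin m → ℝ) :
    ∃ k : Fin m → ℤ, (v - fun j => (k j : ℝ)) ∈ M '' S := by
  obtain ⟨K, Ω, d, hpart, hMΩ⟩ := hM
  set u := (Lmat m)⁻¹.mulVec (v - fun _ => x)
  have hLu : (Lmat m).mulVec u = v - fun _ => x := by
    rw [Matrix.mulVec_mulVec, Matrix.mul_nonsing_inv _ (by simp [Lmat_det]), Matrix.one_mulVec]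
  obtain ⟨k, hk⟩ := hS u
  obtain ⟨i, hi, -⟩ := hpart (u - fun j => (k j : ℝ))
  obtain ⟨k', hk'⟩ := Lmat_mulVec_intCast m k
  refine ⟨fun j => k' j - d i j, _, hk, ?_⟩
  rw [hMΩ i _ hi, Matrix.mulVec_sub, hLu, hk']
  funext j
  simp only [Pi.add_apply, Pi.sub_apply, Int.cast_sub]
  ring

theorem sigma_delta_invariant_set_contains_tile_general (m : ℕ) (x : ℝ)
    (M : (Fin m → ℝ) → (Fin m → ℝ)) (hM : IsSigmaDeltaMap m x M)
    (Γ₀ : Set (Fin m → ℝ)) (hbdd : Bornology.IsBounded Γ₀)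
    (hinv : M '' Γ₀ ⊆ Γ₀)
    (htile : ∃ T, IsTile m T ∧ T ⊆ Γ₀) :
    ∃ T, IsTile m T ∧ T ⊆ ⋂ k : ℕ, M^[k] '' Γ₀ := by
  obtain ⟨T₀, hT₀, hT₀Γ₀⟩ := htile
  have hiter n v : ∃ k : Fin m → ℤ, (v - fun j => (k j : ℝ)) ∈ M^[n] '' Γ₀ := by
    induction n generalizing v with
    | zero => exact (hT₀ v).exists.imp fun k hk => by simpa using hT₀Γ₀ hk
    | succ n ih =>
      rw [iterate_succ', image_comp]
      exact hM.exists_sub_intCast_mem_image ih v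
  have hΓ v : ∃ k : Fin m → ℤ, (v - fun j => (k j : ℝ)) ∈ ⋂ n, M^[n] '' Γ₀ := by
    obtain ⟨k, hk⟩ := Set.Finite.nonempty_iInter_of_antitone
      (A := fun n => {k : Fin m → ℤ | (v - fun j => (k j : ℝ)) ∈ M^[n] '' Γ₀})
      (fun _ _ hab _ hk => image_iterate_antitone hinv hab hk) (fun n => hiter n v)
      (by simpa using finite_setOf_sub_intCast_mem hbdd v)
    exact ⟨k, mem_iInter.2 fun n => mem_iInter.1 hk n⟩
  obtain ⟨T, hTΓ, hT⟩ := exists_subset_forall_existsUnique_sub_mem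
    (f := AddMonoidHom.compLeft (Int.castAddHom ℝ) (Fin m)) Int.cast_injective.comp_left hΓ
  exact ⟨T, hT, hTΓ⟩

/-- if `Γ₀` is bounded, positively invariant under a Σ∆ map `M`, and contains
a `ℤ^m`-tile, then `Γ = ⋂_{k ≥ 0} M^k(Γ₀)` contains a `ℤ^m`-tile. -/
theorem sigma_delta_invariant_set_contains_tile (m : ℕ) (hm : 1 ≤ m) (x : ℝ)
    (M : (Fin m → ℝ) → (Fin m → ℝ)) (hM : IsSigmaDeltaMap m x M)
    (Γ₀ : Set (Fin m → ℝ)) (hbdd : Bornology.IsBounded Γ₀)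
    (hinv : M '' Γ₀ ⊆ Γ₀)
    (htile : ∃ T, IsTile m T ∧ T ⊆ Γ₀) :
    ∃ T, IsTile m T ∧ T ⊆ ⋂ k : ℕ, M^[k] '' Γ₀ :=
  sigma_delta_invariant_set_contains_tile_general m x M hM Γ₀ hbdd hinv htile
end
end

section
/- Let 𝓜 : ℝ^m → ℝ^m be a Σ∆ map with input x ∈ ℝ, and let Γ ⊆ ℝ^m be a ℤ^m-tile with 𝓜(Γ) ⊆ Γ. Then for every u₀ ∈ Γ and every integer n ≥ 0, 𝓜^n(u₀) = ⟨ L^n u₀ + x s[n] ⟩_Γ, where s[n] = (Σ_{k=0}^{n-1} L^k) 𝟏 ∈ ℝ^m. -/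
open MeasureTheory

noncomputable section

/-- `s[n] = (∑_{k=0}^{n-1} L^k) 𝟏 ∈ ℝ^m`. -/
def svec (m n : ℕ) : Fin m → ℝ :=
  (∑ k ∈ Finset.range n, (Lmat m) ^ k).mulVec (fun _ => 1)

lemma svec_succ (m n : ℕ) :
    svec m (n+1) = (Lmat m).mulVec (svec m n) + fun _ => 1 := by
  unfold svec
  rw [Finset.sum_range_succ']
  simp only [pow_succ', pow_zero]
  rw [← Finset.mul_sum, Matrix.add_mulVec, Matrix.one_mulVec, Matrix.mulVec_mulVec]

lemma lmat_cast (m : ℕ) (k : Fin m → ℤ) :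
    (Lmat m).mulVec (fun j => (k j : ℝ)) =
      fun j => ((∑ l, if l ≤ j then k l else 0 : ℤ) : ℝ) := by
  funext j
  simp only [Matrix.mulVec, dotProduct, Lmat]
  push_cast
  refine Finset.sum_congr rfl fun l _ => ?_
  split <;> simp

/-- if the `ℤ^m`-tile `Γ` is positively invariant under the Σ∆ map `M`,
then for `u₀ ∈ Γ` and `n ≥ 0`, `M^n(u₀) = ⟨ L^n u₀ + x s[n] ⟩_Γ`, i.e. `M^n(u₀)` is the
unique point of `Γ` congruent to `L^n u₀ + x s[n]` modulo `ℤ^m`. -/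
theorem sigma_delta_iterate_formula (m : ℕ) (hm : 1 ≤ m) (x : ℝ)
    (M : (Fin m → ℝ) → (Fin m → ℝ)) (hM : IsSigmaDeltaMap m x M)
    (Γ : Set (Fin m → ℝ)) (hΓ : IsTile m Γ) (hinv : M '' Γ ⊆ Γ)
    (u₀ : Fin m → ℝ) (hu₀ : u₀ ∈ Γ) (n : ℕ) :
    M^[n] u₀ ∈ Γ ∧
      ∃ k : Fin m → ℤ,
        M^[n] u₀ = ((Lmat m) ^ n).mulVec u₀ + x • svec m n + fun j => (k j : ℝ) := by
  obtain ⟨K, Ω, d, hpart, hMdef⟩ := hM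
  induction n with
  | zero =>
    refine ⟨hu₀, 0, ?_⟩
    simp [svec, Matrix.one_mulVec]
    rfl
  | succ n ih =>
    obtain ⟨hmem, k, hk⟩ := ih
    obtain ⟨i, hi, -⟩ := hpart (M^[n] u₀)
    refine ⟨hinv ⟨_, hmem, (Function.iterate_succ_apply' M n u₀).symm⟩,
      fun j => (∑ l, if l ≤ j then k l else 0) + d i j, ?_⟩
    rw [Function.iterate_succ_apply', hMdef i _ hi, hk,
      Matrix.mulVec_add, Matrix.mulVec_add, Matrix.mulVec_smul,
      Matrix.mulVec_mulVec, ← pow_succ', svec_succ, lmat_cast]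
    funext j
    simp only [Pi.add_apply, Pi.smul_apply, smul_eq_mul]
    push_cast
    ring
end
end

section
/- There exists a set E of irrational numbers, dense in ℝ, with the following property. Let x ∈ E, let m ≥ 1 be an integer, let c₁, c₂ > 0, and for each integer M ≥ 1 let Φ_M : ℝ → ℂ be a 1-periodic function satisfying |Φ_M(ξ)| ≥ c₁ whenever ‖ξ‖ ≤ c₂/M. Suppose (a_n)_{n ∈ ℤ∖{0}} are complex numbers for which there exist constants C > 0 and β > 0 with |a_n| ≥ C |n|^{−β} for all but finitely many n. Then for every δ > 0: limsup_{M → ∞} M^{2m+δ} · Σ_{n ∈ ℤ∖{0}} |2 sin(π n x)|^{2m} |Φ_M(n x)|² |a_n|² = +∞. -/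
/-!
Take `E` to be the Liouville numbers. For such `x` and any `t`, infinitely many `q` have
`ε := ‖q x‖ < q^(-t)`. Choosing `M ≈ c₂ / (2ε)` puts `q x` in the window where `|Φ_M| ≥ c₁`, while
`|2 sin (π q x)| ≥ 4ε ≳ 1/M`; so the `q`-th term alone gives
`M^(2m+δ) 𝓔_pp ≳ ε^(-δ) |a_q|² ≥ q^(tδ - 2β)`, which is unbounded once `tδ > 2β`.
-/

open Real Filter

noncomputable section

/-- `‖θ‖`: the distance from `θ` to the nearest integer. -/
def natDist (θ : ℝ) : ℝ := |θ - round θ|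

open scoped ENNReal NNReal

lemma natDist_pos_of_irrational {θ : ℝ} (h : Irrational θ) : 0 < natDist θ :=
  abs_pos.2 (sub_ne_zero.2 (h.ne_int _))

lemma two_mul_natDist_le_abs_sin (θ : ℝ) : 2 * natDist θ ≤ |sin (π * θ)| := by
  set r := θ - round θ
  have hr : |r| ≤ 1 / 2 := abs_sub_round θ
  have hperiodic : |sin (π * θ)| = |sin (π * r)| := by
    rw [show π * θ = π * r + round θ * π by ring, sin_add_int_mul_pi, abs_mul,
      abs_neg_one_zpow, one_mul]
  have hπr : |π * r| = π * |r| := by rw [abs_mul, abs_of_pos pi_pos]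
  calc 2 * natDist θ = 2 / π * (π * |r|) := by field_simp; rfl
    _ ≤ sin (π * |r|) := mul_le_sin (by positivity) (by nlinarith [pi_pos])
    _ = |sin (π * θ)| := by
      rw [hperiodic, abs_sin_eq_sin_abs_of_abs_le_pi (by rw [hπr]; nlinarith [pi_pos]), hπr]

lemma Liouville.frequently_natDist_lt_rpow_neg {x : ℝ} (hx : Liouville x) (t : ℝ) :
    ∃ᶠ q : ℕ in atTop, natDist (q * x) < (q : ℝ) ^ (-t) := by
  have hfreq := (hx.liouvilleWith (t + 2)).frequently_lt_rpow_neg (q := t + 1) (by linarith)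
  refine (hfreq.and_eventually (eventually_gt_atTop 0)).mono ?_
  rintro q ⟨⟨p, -, hp⟩, hq⟩
  have hq' : (0 : ℝ) < q := by exact_mod_cast hq
  calc natDist (q * x) ≤ |q * x - p| := round_le _ p
    _ = q * |x - p / q| := by
      rw [show (q : ℝ) * x - p = q * (x - p / q) by field_simp, abs_mul, abs_of_pos hq']
    _ < q * (q : ℝ) ^ (-(t + 1)) := mul_lt_mul_of_pos_left hp hq'
    _ = (q : ℝ) ^ (-t) := by
      rw [neg_add, rpow_add hq', rpow_neg_one, mul_left_comm, mul_inv_cancel₀ hq'.ne', mul_one]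

lemma eventually_atTop_natCast_of_finite {P : ℤ → Prop} (h : {n : ℤ | n ≠ 0 ∧ ¬ P n}.Finite) :
    ∀ᶠ n : ℕ in atTop, P n := by
  have hcofinite := h.eventually_cofinite_notMem
  rw [Int.cofinite_eq] at hcofinite
  filter_upwards [tendsto_natCast_atTop_atTop.eventually (eventually_sup.1 hcofinite).2,
    eventually_gt_atTop 0] with n hn hpos
  by_contra hP
  exact hn ⟨by exact_mod_cast hpos.ne', hP⟩

def purePointSummand (m : ℕ) (x : ℝ) (φ : ℝ → ℂ) (a : ℤ → ℂ) (n : ℤ) : ℝ :=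
  |2 * sin (π * n * x)| ^ (2 * m) * ‖φ (n * x)‖ ^ 2 * ‖a n‖ ^ 2

def purePointError (m : ℕ) (x : ℝ) (φ : ℝ → ℂ) (a : ℤ → ℂ) : ℝ≥0∞ :=
  ∑' n : {n : ℤ // n ≠ 0}, ENNReal.ofReal (purePointSummand m x φ a n)

lemma ofReal_purePointSummand_le_purePointError (m : ℕ) (x : ℝ) (φ : ℝ → ℂ) (a : ℤ → ℂ)
    {n : ℤ} (hn : n ≠ 0) :
    ENNReal.ofReal (purePointSummand m x φ a n) ≤ purePointError m x φ a :=
  ENNReal.le_tsum (f := fun n : {n : ℤ // n ≠ 0} => ENNReal.ofReal (purePointSummand m x φ a n))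
    ⟨n, hn⟩

lemma le_rpow_mul_purePointSummand {m : ℕ} {x c₁ c₂ δ M : ℝ} {φ : ℝ → ℂ} {a : ℤ → ℂ} {n : ℤ}
    (hc₁ : 0 ≤ c₁) (hc₂ : 0 < c₂) (hδ : 0 ≤ δ) (hε : 0 < natDist (n * x))
    (hscale : c₂ ≤ 2 * M * natDist (n * x)) (hφ : c₁ ≤ ‖φ (n * x)‖) :
    (2 * c₂) ^ (2 * m) * (c₂ / 2) ^ δ * c₁ ^ 2 * natDist (n * x) ^ (-δ) * ‖a n‖ ^ 2 ≤
      M ^ (2 * (m : ℝ) + δ) * purePointSummand m x φ a n := by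
  set ε := natDist (n * x)
  set S := |2 * sin (π * n * x)|
  have hM : 0 < M := by
    by_contra! h
    nlinarith
  have hsin : 4 * ε ≤ S := by
    simp only [S, mul_assoc π, abs_mul, abs_two]
    linarith [two_mul_natDist_le_abs_sin (n * x)]
  have hscale' : (c₂ / 2) ^ δ * ε ^ (-δ) ≤ M ^ δ := by
    rw [rpow_neg hε.le, ← div_eq_mul_inv, ← div_rpow (by positivity) hε.le]
    exact rpow_le_rpow (by positivity) (by rw [div_le_iff₀ hε]; linarith) hδ
  have hsplit : M ^ (2 * (m : ℝ) + δ) = M ^ (2 * m) * M ^ δ := by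
    rw [rpow_add hM, show 2 * (m : ℝ) = (2 * m : ℕ) by push_cast; ring, rpow_natCast]
  calc (2 * c₂) ^ (2 * m) * (c₂ / 2) ^ δ * c₁ ^ 2 * ε ^ (-δ) * ‖a n‖ ^ 2
      = (2 * c₂) ^ (2 * m) * ((c₂ / 2) ^ δ * ε ^ (-δ)) * (c₁ ^ 2 * ‖a n‖ ^ 2) := by ring
    _ ≤ (M * S) ^ (2 * m) * M ^ δ * (‖φ (n * x)‖ ^ 2 * ‖a n‖ ^ 2) := by
      gcongr ?_ ^ _ * ?_ * (?_ ^ _ * _)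
      nlinarith
    _ = M ^ (2 * (m : ℝ) + δ) * purePointSummand m x φ a n := by
      rw [hsplit, mul_pow, purePointSummand]
      ring

lemma exists_nat_scale {ε c : ℝ} (hε : 0 < ε) (M₀ : ℕ) (h : 2 * (M₀ + 1) * ε ≤ c) :
    ∃ M : ℕ, M₀ < M ∧ M * ε ≤ c ∧ c ≤ 2 * M * ε := by
  have hlow : (M₀ : ℝ) + 1 ≤ c / (2 * ε) := by rw [le_div_iff₀ (by positivity)]; linarith
  have hceil := Nat.ceil_lt_add_one (by linarith : 0 ≤ c / (2 * ε))
  have hle := Nat.le_ceil (c / (2 * ε))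
  refine ⟨⌈c / (2 * ε)⌉₊, Nat.lt_ceil.2 (by linarith), ?_, ?_⟩
  · have : (⌈c / (2 * ε)⌉₊ : ℝ) ≤ c / ε := by
      rw [show c / ε = 2 * (c / (2 * ε)) by field_simp]
      linarith
    rwa [le_div_iff₀ hε] at this
  · rw [div_le_iff₀ (by positivity)] at hle
    linarith

lemma sq_mul_le_rpow_neg_mul_sq {q ε δ β C w : ℝ} (hq : 0 < q) (hε : 0 < ε) (hδ : 0 < δ)
    (hC : 0 ≤ C) (hεq : ε ≤ q ^ (-((2 * β + 1) / δ))) (hw : C * q ^ (-β) ≤ w) :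
    C ^ 2 * q ≤ ε ^ (-δ) * w ^ 2 := by
  have hεδ : q ^ (2 * β + 1) ≤ ε ^ (-δ) := by
    calc q ^ (2 * β + 1) = (q ^ (-((2 * β + 1) / δ))) ^ (-δ) := by
          rw [← rpow_mul hq.le]; congr 1; field_simp
      _ ≤ ε ^ (-δ) := rpow_le_rpow_of_nonpos hε hεq (by linarith)
  have hq1 : q = q ^ (2 * β + 1) * (q ^ (-β)) ^ 2 := by
    rw [← rpow_natCast, ← rpow_mul hq.le, ← rpow_add hq,
      show 2 * β + 1 + -β * (2 : ℕ) = 1 by push_cast; ring, rpow_one]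
  calc C ^ 2 * q = C ^ 2 * (q ^ (2 * β + 1) * (q ^ (-β)) ^ 2) := by rw [← hq1]
    _ = q ^ (2 * β + 1) * (C * q ^ (-β)) ^ 2 := by ring
    _ ≤ ε ^ (-δ) * w ^ 2 := by gcongr

lemma ofReal_le_rpow_mul_purePointError {m q M : ℕ} {x c₁ c₂ C β δ : ℝ} {φ : ℝ → ℂ}
    {a : ℤ → ℂ} (hq : 0 < q) (hc₁ : 0 ≤ c₁) (hc₂ : 0 < c₂) (hC : 0 ≤ C) (hδ : 0 < δ)
    (hε : 0 < natDist (q * x)) (happrox : natDist (q * x) ≤ (q : ℝ) ^ (-((2 * β + 1) / δ)))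
    (hscale : c₂ ≤ 2 * M * natDist (q * x)) (hφ : c₁ ≤ ‖φ (q * x)‖)
    (hweight : C * (q : ℝ) ^ (-β) ≤ ‖a q‖) :
    ENNReal.ofReal ((2 * c₂) ^ (2 * m) * (c₂ / 2) ^ δ * c₁ ^ 2 * (C ^ 2 * q)) ≤
      ENNReal.ofReal ((M : ℝ) ^ (2 * (m : ℝ) + δ)) * purePointError m x φ a := by
  have hterm := le_rpow_mul_purePointSummand (n := q) (φ := φ) (a := a) (m := m) (M := M) hc₁ hc₂
    hδ.le (by rwa [Int.cast_natCast]) (by rwa [Int.cast_natCast]) (by rwa [Int.cast_natCast])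
  rw [Int.cast_natCast] at hterm
  calc ENNReal.ofReal ((2 * c₂) ^ (2 * m) * (c₂ / 2) ^ δ * c₁ ^ 2 * (C ^ 2 * q))
      ≤ ENNReal.ofReal ((2 * c₂) ^ (2 * m) * (c₂ / 2) ^ δ * c₁ ^ 2 *
          (natDist (q * x) ^ (-δ) * ‖a q‖ ^ 2)) := by
        gcongr ENNReal.ofReal (_ * ?_)
        exact sq_mul_le_rpow_neg_mul_sq (by positivity) hε hδ hC happrox hweight
    _ ≤ ENNReal.ofReal ((M : ℝ) ^ (2 * (m : ℝ) + δ) * purePointSummand m x φ a q) :=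
        ENNReal.ofReal_le_ofReal (by rw [← mul_assoc]; exact hterm)
    _ ≤ ENNReal.ofReal ((M : ℝ) ^ (2 * (m : ℝ) + δ)) * purePointError m x φ a := by
        rw [ENNReal.ofReal_mul (by positivity)]
        gcongr
        exact ofReal_purePointSummand_le_purePointError m x φ a (by exact_mod_cast hq.ne')

lemma Liouville.frequently_le_rpow_mul_purePointError {x : ℝ} (hx : Liouville x) (m : ℕ)
    {c₁ c₂ : ℝ} (hc₁ : 0 < c₁) (hc₂ : 0 < c₂) {Φ : ℕ → ℝ → ℂ}
    (hΦ : ∀ M : ℕ, 1 ≤ M → ∀ ξ : ℝ, natDist ξ ≤ c₂ / M → c₁ ≤ ‖Φ M ξ‖) {a : ℤ → ℂ} {C β : ℝ}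
    (hC : 0 < C) (hβ : 0 < β) (ha : ∀ᶠ n : ℕ in atTop, C * (n : ℝ) ^ (-β) ≤ ‖a n‖)
    {δ : ℝ} (hδ : 0 < δ) (r : ℝ≥0) :
    ∃ᶠ M : ℕ in atTop, (r : ℝ≥0∞) ≤
      ENNReal.ofReal ((M : ℝ) ^ (2 * (m : ℝ) + δ)) * purePointError m x (Φ M) a := by
  set t := (2 * β + 1) / δ
  set K := (2 * c₂) ^ (2 * m) * (c₂ / 2) ^ δ * c₁ ^ 2
  have hK : 0 < K * C ^ 2 := by positivity
  rw [frequently_atTop]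
  intro M₀
  have hsmall : ∀ᶠ q : ℕ in atTop, (q : ℝ) ^ (-t) < c₂ / (2 * (M₀ + 1)) :=
    ((tendsto_rpow_neg_atTop (by positivity)).comp tendsto_natCast_atTop_atTop).eventually
      (gt_mem_nhds (by positivity))
  have hlarge : ∀ᶠ q : ℕ in atTop, (r : ℝ) ≤ K * C ^ 2 * q :=
    (tendsto_natCast_atTop_atTop.const_mul_atTop hK).eventually_ge_atTop r
  obtain ⟨q, ⟨⟨hsmall, hlarge⟩, hweight, hq⟩, happrox⟩ :=
    (((hsmall.and hlarge).and (ha.and (eventually_gt_atTop 0))).and_frequently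
      (hx.frequently_natDist_lt_rpow_neg t)).exists
  have hε : 0 < natDist (q * x) := natDist_pos_of_irrational (hx.irrational.natCast_mul hq.ne')
  obtain ⟨M, hM₀, hMε, hscale⟩ := exists_nat_scale (c := c₂) hε M₀ <| by
    rw [lt_div_iff₀ (by positivity)] at hsmall
    nlinarith
  have hΦq : c₁ ≤ ‖Φ M (q * x)‖ :=
    hΦ M (by omega) _ (by rw [le_div_iff₀ (by exact_mod_cast (by omega : 0 < M))]; linarith)
  refine ⟨M, hM₀.le, ?_⟩
  calc (r : ℝ≥0∞) = ENNReal.ofReal r := ENNReal.ofReal_coe_nnreal.symm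
    _ ≤ ENNReal.ofReal (K * (C ^ 2 * q)) := ENNReal.ofReal_le_ofReal (by rwa [← mul_assoc])
    _ ≤ _ := ofReal_le_rpow_mul_purePointError hq hc₁.le hc₂ hC.le hδ hε happrox.le hscale hΦq
        hweight

/-- there is a dense set `E` of irrational numbers such that for `x ∈ E`,
any order `m ≥ 1`, any family of 1-periodic transfer functions `Φ_M` with
`|Φ_M(ξ)| ≥ c₁` for `‖ξ‖ ≤ c₂/M`, and any spectral weights with `|a_n| ≥ C |n|^{−β}` for
all but finitely many `n`, the pure-point mean square error satisfies
`limsup_M M^{2m+δ} 𝓔_pp(x, Φ_M) = ∞` for every `δ > 0`. -/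
theorem pure_point_mse_lower_bound :
    ∃ E : Set ℝ, (∀ x ∈ E, Irrational x) ∧ Dense E ∧
      ∀ x ∈ E, ∀ m : ℕ, 1 ≤ m → ∀ c₁ c₂ : ℝ, 0 < c₁ → 0 < c₂ →
        ∀ Φ : ℕ → ℝ → ℂ,
          (∀ M : ℕ, 1 ≤ M → Function.Periodic (Φ M) 1) →
          (∀ M : ℕ, 1 ≤ M → ∀ ξ : ℝ, natDist ξ ≤ c₂ / M → c₁ ≤ ‖Φ M ξ‖) →
          ∀ a : ℤ → ℂ,
            (∃ C : ℝ, 0 < C ∧ ∃ β : ℝ, 0 < β ∧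
              {n : ℤ | n ≠ 0 ∧ ¬(C * |(n : ℝ)| ^ (-β) ≤ ‖a n‖)}.Finite) →
            ∀ δ : ℝ, 0 < δ →
              Filter.limsup
                (fun M : ℕ =>
                  ENNReal.ofReal ((M : ℝ) ^ (2 * (m : ℝ) + δ)) *
                    ∑' n : {n : ℤ // n ≠ 0},
                      ENNReal.ofReal
                        (|2 * Real.sin (π * (n : ℤ) * x)| ^ (2 * m) *
                          ‖Φ M ((n : ℤ) * x)‖ ^ 2 * ‖a (n : ℤ)‖ ^ 2))
                Filter.atTop = ⊤ := by
  refine ⟨{x | Liouville x}, fun x hx => hx.irrational, dense_liouville, ?_⟩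
  rintro x hx m - c₁ c₂ hc₁ hc₂ Φ - hΦ a ⟨C, hC, β, hβ, ha⟩ δ hδ
  have ha' : ∀ᶠ n : ℕ in atTop, C * (n : ℝ) ^ (-β) ≤ ‖a n‖ := by
    simpa using eventually_atTop_natCast_of_finite ha
  exact ENNReal.eq_top_of_forall_nnreal_le fun r => le_limsup_of_frequently_le <|
    hx.frequently_le_rpow_mul_purePointError m hc₁ hc₂ hΦ hC hβ ha' hδ r
end
end

section
/- Let m ≥ 1, 1 ≤ p ≤ ∞, and let s ∈ L^p(𝕋) be nonnegative. Then there is a constant C depending only on m and p such that for every integer M ≥ 1: ∫₀¹ |2 sin(π ξ)|^{2m} · |sin(π M ξ)/(M sin(π ξ))|^{2(m+1)} · s(ξ) dξ ≤ C ‖s‖_{L^p(𝕋)} M^{−(2m+1−1/p)}. -/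
/-!
Write `r(ξ) = |sin (π M ξ) / (M sin (π ξ))|` and `d(ξ) = min ξ (1 - ξ)`. Since
`|sin (M x)| ≤ M |sin x|` and, by Jordan's inequality, `|sin (π ξ)| ≥ 2 d(ξ)`, we get
`r ≤ min 1 (2 M d)⁻¹`; moreover `|2 sin (π ξ)| · r = |2 sin (π M ξ)| / M ≤ 2 / M`. Hence the
kernel `(|2 sin (π ξ)| r)^(2m) r²` is at most `(2/M)^(2m) k(d(ξ))` with `k(t) = min 1 (2 M t)⁻²`,
a function bounded by `1` whose integral over the circle is at most `2/M`. Therefore its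
`L^q` norm is at most `(2/M)^(2m + 1/q)` for every `q ≥ 1`, and Hölder's inequality with the
exponent `q` conjugate to `p` (so `1/q = 1 - 1/p`) gives the bound.
-/

open MeasureTheory Real ENNReal Set

noncomputable section

lemma abs_sin_nat_mul_le (n : ℕ) (x : ℝ) : |sin (n * x)| ≤ n * |sin x| := by
  induction n with
  | zero => simp
  | succ n ih =>
    rw [Nat.cast_succ, add_mul, one_mul, sin_add]
    calc |sin (n * x) * cos x + cos (n * x) * sin x|
        ≤ |sin (n * x)| * |cos x| + |cos (n * x)| * |sin x| := by
          rw [← abs_mul, ← abs_mul]; exact abs_add_le _ _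
      _ ≤ n * |sin x| * 1 + 1 * |sin x| := by
          gcongr
          exacts [abs_cos_le_one _, abs_cos_le_one _]
      _ = (n + 1) * |sin x| := by ring

lemma two_mul_min_le_abs_sin_pi_mul {ξ : ℝ} (h0 : 0 ≤ ξ) (h1 : ξ ≤ 1) :
    2 * min ξ (1 - ξ) ≤ |sin (π * ξ)| := by
  have jordan : ∀ t : ℝ, 0 ≤ t → t ≤ 1 / 2 → 2 * t ≤ |sin (π * t)| := fun t ht0 ht1 => by
    have := mul_le_sin (x := π * t) (by positivity) (by nlinarith [pi_pos])
    rw [← mul_assoc, div_mul_cancel₀ _ pi_ne_zero] at this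
    exact this.trans (le_abs_self _)
  rcases le_total ξ (1 / 2) with h | h
  · exact (mul_le_mul_of_nonneg_left (min_le_left _ _) zero_le_two).trans (jordan ξ h0 h)
  · have := jordan (1 - ξ) (by linarith) (by linarith)
    rw [show π * (1 - ξ) = π - π * ξ by ring, sin_pi_sub] at this
    exact (mul_le_mul_of_nonneg_left (min_le_right _ _) zero_le_two).trans this

lemma abs_sin_pi_nat_mul_div_le {M : ℕ} (hM : 0 < M) {ξ : ℝ} (hξ : ξ ∈ Ioo 0 1) :
    |sin (π * M * ξ) / (M * sin (π * ξ))| ≤ min 1 (2 * M * min ξ (1 - ξ))⁻¹ := by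
  have hd : 0 < min ξ (1 - ξ) := lt_min hξ.1 (by linarith [hξ.2])
  have hda := two_mul_min_le_abs_sin_pi_mul hξ.1.le hξ.2.le
  have hMa : 0 < M * |sin (π * ξ)| := by
    have : 0 < |sin (π * ξ)| := by linarith
    positivity
  rw [abs_div, abs_mul, Nat.abs_cast]
  refine le_min (div_le_one_of_le₀ ?_ hMa.le) ?_
  · rw [show π * M * ξ = M * (π * ξ) by ring]
    exact abs_sin_nat_mul_le M (π * ξ)
  · calc _ ≤ 1 / (M * |sin (π * ξ)|) := by gcongr; exact abs_sin_le_one _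
      _ ≤ 1 / (M * (2 * min ξ (1 - ξ))) := by gcongr
      _ = _ := by rw [one_div, mul_left_comm, mul_assoc]

def filteredNoiseKernel (m M : ℕ) (ξ : ℝ) : ℝ :=
  |2 * sin (π * ξ)| ^ (2 * m) * |sin (π * M * ξ) / (M * sin (π * ξ))| ^ (2 * (m + 1))

def sincSqMajorant (M : ℕ) (t : ℝ) : ℝ := min 1 ((2 * M * t) ^ 2)⁻¹

lemma sincSqMajorant_nonneg (M : ℕ) (t : ℝ) : 0 ≤ sincSqMajorant M t := by
  unfold sincSqMajorant; positivity

lemma sincSqMajorant_le_one (M : ℕ) (t : ℝ) : sincSqMajorant M t ≤ 1 := min_le_left _ _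

lemma measurable_sincSqMajorant (M : ℕ) : Measurable (sincSqMajorant M) := by
  unfold sincSqMajorant; fun_prop

lemma measurable_filteredNoiseKernel (m M : ℕ) : Measurable (filteredNoiseKernel m M) := by
  unfold filteredNoiseKernel; fun_prop

lemma filteredNoiseKernel_le {m M : ℕ} (hM : 0 < M) {ξ : ℝ} (hξ : ξ ∈ Ioo 0 1) :
    filteredNoiseKernel m M ξ ≤ (2 / M) ^ (2 * m) * sincSqMajorant M (min ξ (1 - ξ)) := by
  set r := |sin (π * M * ξ) / (M * sin (π * ξ))|
  have hr := le_min_iff.1 (abs_sin_pi_nat_mul_div_le hM hξ)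
  have hsin : sin (π * ξ) ≠ 0 := (sin_pos_of_pos_of_lt_pi (by nlinarith [pi_pos, hξ.1])
    (by nlinarith [pi_pos, hξ.2])).ne'
  have hcancel : |2 * sin (π * ξ)| * r = |2 * sin (π * M * ξ) / M| := by
    rw [← abs_mul]; congr 1; field_simp
  calc filteredNoiseKernel m M ξ = (|2 * sin (π * ξ)| * r) ^ (2 * m) * r ^ 2 := by
        rw [filteredNoiseKernel, mul_pow, mul_add, pow_add]; ring
    _ ≤ (2 / M) ^ (2 * m) * sincSqMajorant M (min ξ (1 - ξ)) := by
        rw [hcancel]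
        gcongr
        · rw [abs_div, abs_mul, abs_two, Nat.abs_cast]
          gcongr
          exact mul_le_of_le_one_right zero_le_two (abs_sin_le_one _)
        · refine le_min (pow_le_one₀ (abs_nonneg _) hr.1) ?_
          rw [← inv_pow]
          exact pow_le_pow_left₀ (abs_nonneg _) hr.2 2

lemma intervalIntegrable_sincSqMajorant (M : ℕ) (a b : ℝ) :
    IntervalIntegrable (sincSqMajorant M) volume a b :=
  intervalIntegrable_const.mono_fun' (g := fun _ => (1 : ℝ))
    (measurable_sincSqMajorant M).aestronglyMeasurable (.of_forall fun t => by
      simpa only [norm_of_nonneg (sincSqMajorant_nonneg M t)] using sincSqMajorant_le_one M t)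

lemma integral_sincSqMajorant_le {M : ℕ} (hM : 0 < M) :
    ∫ t in (0:ℝ)..1, sincSqMajorant M t ≤ 1 / M := by
  set c : ℝ := (2 * M)⁻¹
  have hc : 0 < c := by positivity
  have hc1 : c ≤ 1 := inv_le_one_of_one_le₀ (by norm_cast; omega)
  have h_near : ∫ t in (0:ℝ)..c, sincSqMajorant M t ≤ c := by
    simpa using intervalIntegral.integral_mono_on hc.le (intervalIntegrable_sincSqMajorant M 0 c)
      intervalIntegrable_const fun t _ => sincSqMajorant_le_one M t
  have h_far : ∫ t in c..1, sincSqMajorant M t ≤ c := by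
    have hpos : ∀ t ∈ uIcc c 1, t ≠ 0 := fun t ht =>
      (hc.trans_le (uIcc_of_le hc1 ▸ ht).1).ne'
    calc ∫ t in c..1, sincSqMajorant M t ≤ ∫ t in c..1, c ^ 2 * t ^ (-2 : ℤ) := by
          refine intervalIntegral.integral_mono_on hc1 (intervalIntegrable_sincSqMajorant M c 1)
            ((continuousOn_const.mul (continuousOn_id.zpow₀ _ fun t ht => .inl (hpos t ht)))
              |>.intervalIntegrable) fun t _ => (min_le_right _ _).trans_eq ?_
          simp only [c, zpow_neg, mul_pow, mul_inv, inv_pow]; norm_cast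
      _ = c ^ 2 * (c⁻¹ - 1) := by
          rw [intervalIntegral.integral_const_mul, integral_zpow (.inr ⟨by norm_num,
            fun h => hpos 0 h rfl⟩)]
          norm_num
          exact .inl (by ring)
      _ ≤ c := by nlinarith [mul_inv_cancel₀ hc.ne']
  calc ∫ t in (0:ℝ)..1, sincSqMajorant M t
      = (∫ t in (0:ℝ)..c, sincSqMajorant M t) + ∫ t in c..1, sincSqMajorant M t :=
        (intervalIntegral.integral_add_adjacent_intervals
          (intervalIntegrable_sincSqMajorant M 0 c) (intervalIntegrable_sincSqMajorant M c 1)).symm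
    _ ≤ c + c := add_le_add h_near h_far
    _ = 1 / M := by simp only [c]; field_simp; ring

lemma eLpNorm_one_sincSqMajorant_min_le {M : ℕ} (hM : 0 < M) :
    eLpNorm (fun ξ => sincSqMajorant M (min ξ (1 - ξ))) 1 (volume.restrict (Ioc 0 1)) ≤
      ENNReal.ofReal (2 / M) := by
  set g := fun ξ : ℝ => sincSqMajorant M ξ + sincSqMajorant M (1 - ξ)
  have h_refl :
      ∫ ξ in (0:ℝ)..1, sincSqMajorant M (1 - ξ) = ∫ ξ in (0:ℝ)..1, sincSqMajorant M ξ := by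
    simp
  have h_refl_int : IntervalIntegrable (fun ξ => sincSqMajorant M (1 - ξ)) volume 0 1 := by
    simpa using (intervalIntegrable_sincSqMajorant M 1 0).comp_sub_left 1
  have hg_int : IntervalIntegrable g volume 0 1 :=
    (intervalIntegrable_sincSqMajorant M 0 1).add h_refl_int
  have hg_nonneg : ∀ ξ, 0 ≤ g ξ := fun ξ =>
    add_nonneg (sincSqMajorant_nonneg _ _) (sincSqMajorant_nonneg _ _)
  calc eLpNorm (fun ξ => sincSqMajorant M (min ξ (1 - ξ))) 1 (volume.restrict (Ioc 0 1))
      ≤ eLpNorm g 1 (volume.restrict (Ioc 0 1)) := eLpNorm_mono_real fun ξ => by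
        rw [norm_of_nonneg (sincSqMajorant_nonneg _ _)]
        rcases min_choice ξ (1 - ξ) with h | h <;> rw [h]
        exacts [le_add_of_nonneg_right (sincSqMajorant_nonneg _ _),
          le_add_of_nonneg_left (sincSqMajorant_nonneg _ _)]
    _ = ENNReal.ofReal (∫ ξ in (0:ℝ)..1, g ξ) := by
        rw [eLpNorm_one_eq_lintegral_enorm, intervalIntegral.integral_of_le zero_le_one,
          ofReal_integral_eq_lintegral_ofReal hg_int.1 (.of_forall hg_nonneg)]
        simp_rw [Real.enorm_eq_ofReal (hg_nonneg _)]
    _ ≤ ENNReal.ofReal (2 / M) := by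
        gcongr
        rw [intervalIntegral.integral_add (intervalIntegrable_sincSqMajorant M 0 1) h_refl_int,
          h_refl]
        have := integral_sincSqMajorant_le hM
        rw [← two_mul, show (2 : ℝ) / M = 2 * (1 / M) by ring]
        gcongr

lemma eLpNorm_le_eLpNorm_one_rpow_of_norm_le_one {α E : Type*} [MeasurableSpace α]
    {μ : Measure α} [NormedAddCommGroup E] {f : α → E} (hf : ∀ᵐ x ∂μ, ‖f x‖ ≤ 1)
    {q : ℝ≥0∞} (hq : 1 ≤ q) :
    eLpNorm f q μ ≤ eLpNorm f 1 μ ^ (1 / q).toReal := by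
  rcases eq_or_ne q ∞ with rfl | hq_top
  · simpa [eLpNorm_exponent_top] using eLpNormEssSup_le_of_ae_bound hf
  have hq0 : q ≠ 0 := (zero_lt_one.trans_le hq).ne'
  have ht : 1 ≤ q.toReal := by simpa using toReal_mono hq_top hq
  rw [eLpNorm_eq_lintegral_rpow_enorm_toReal hq0 hq_top, eLpNorm_one_eq_lintegral_enorm,
    one_div q, toReal_inv, ← one_div]
  gcongr ?_ ^ _
  refine lintegral_mono_ae (hf.mono fun x hx => rpow_le_self_of_le_one ?_ ht)
  rw [← ofReal_norm]; exact ofReal_le_one.2 hx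

lemma integral_mul_le_eLpNorm_mul_eLpNorm {α : Type*} [MeasurableSpace α] {μ : Measure α}
    {p q : ℝ≥0∞} [p.HolderConjugate q] {f g : α → ℝ} (hf : MemLp f p μ) (hg : MemLp g q μ) :
    ∫ x, f x * g x ∂μ ≤ (eLpNorm f p μ).toReal * (eLpNorm g q μ).toReal :=
  calc ∫ x, f x * g x ∂μ ≤ ‖∫ x, f x * g x ∂μ‖ := le_norm_self _
    _ ≤ (∫⁻ x, ENNReal.ofReal ‖f x * g x‖ ∂μ).toReal := norm_integral_le_lintegral_norm _
    _ = (eLpNorm (f • g) 1 μ).toReal := by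
        simp [eLpNorm_one_eq_lintegral_enorm, Real.enorm_eq_ofReal_abs]
    _ ≤ (eLpNorm f p μ * eLpNorm g q μ).toReal :=
        toReal_mono (mul_ne_top hf.eLpNorm_ne_top hg.eLpNorm_ne_top)
          (eLpNorm_smul_le_mul_eLpNorm hg.1 hf.1)
    _ = (eLpNorm f p μ).toReal * (eLpNorm g q μ).toReal := toReal_mul

lemma ENNReal.exists_holderConjugate {p : ℝ≥0∞} (hp : 1 ≤ p) :
    ∃ q : ℝ≥0∞, q.HolderConjugate p :=
  ⟨(1 - p⁻¹)⁻¹, holderConjugate_iff.2 <| by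
    rw [inv_inv, tsub_add_cancel_of_le (ENNReal.inv_le_one.2 hp)]⟩

lemma eLpNorm_filteredNoiseKernel_le (m : ℕ) {M : ℕ} (hM : 0 < M) {q : ℝ≥0∞} (hq : 1 ≤ q) :
    eLpNorm (filteredNoiseKernel m M) q (volume.restrict (Ioc 0 1)) ≤
      ENNReal.ofReal ((2 / M) ^ (2 * m) * (2 / M) ^ (1 / q).toReal) := by
  have h_ae : ∀ᵐ ξ ∂(volume.restrict (Ioc (0:ℝ) 1)), ξ ∈ Ioo 0 1 :=
    Measure.restrict_congr_set (Ioo_ae_eq_Ioc (μ := volume) (a := (0:ℝ)) (b := 1)) ▸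
      ae_restrict_mem measurableSet_Ioo
  set μ := volume.restrict (Ioc (0:ℝ) 1)
  set h := fun ξ : ℝ => sincSqMajorant M (min ξ (1 - ξ))
  have hF : ∀ᵐ ξ ∂μ, ‖filteredNoiseKernel m M ξ‖ ≤ (2 / M) ^ (2 * m) * ‖h ξ‖ :=
    h_ae.mono fun ξ hξ => by
      rw [norm_of_nonneg (by unfold filteredNoiseKernel; positivity),
        norm_of_nonneg (sincSqMajorant_nonneg _ _)]
      exact filteredNoiseKernel_le hM hξ
  have hh : ∀ᵐ ξ ∂μ, ‖h ξ‖ ≤ 1 := .of_forall fun ξ => by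
    rw [norm_of_nonneg (sincSqMajorant_nonneg _ _)]; exact sincSqMajorant_le_one _ _
  calc eLpNorm (filteredNoiseKernel m M) q μ
      ≤ ENNReal.ofReal ((2 / M) ^ (2 * m)) * eLpNorm h q μ :=
        eLpNorm_le_mul_eLpNorm_of_ae_le_mul hF q
    _ ≤ ENNReal.ofReal ((2 / M) ^ (2 * m)) * ENNReal.ofReal (2 / M) ^ (1 / q).toReal := by
        gcongr
        exact (eLpNorm_le_eLpNorm_one_rpow_of_norm_le_one hh hq).trans
          (by gcongr; exact eLpNorm_one_sincSqMajorant_min_le hM)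
    _ = _ := by
        rw [ofReal_rpow_of_nonneg (by positivity) toReal_nonneg, ← ofReal_mul (by positivity)]

lemma two_div_pow_mul_rpow_le {M : ℝ} (hM : 0 < M) (n : ℕ) {θ : ℝ} (hθ : θ ≤ 1) :
    (2 / M) ^ n * (2 / M) ^ θ ≤ 2 ^ (n + 1) * M ^ (-(n + θ)) := by
  rw [← Real.rpow_natCast, ← rpow_add (by positivity), div_rpow zero_le_two hM.le, div_eq_mul_inv,
    ← rpow_neg hM.le]
  gcongr
  rw [← Real.rpow_natCast, Nat.cast_succ]
  exact rpow_le_rpow_of_exponent_le one_le_two (by linarith)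

theorem ac_mse_Lp_bound_general (m : ℕ) (p : ℝ≥0∞) (hp : 1 ≤ p) :
    ∃ C : ℝ, 0 < C ∧
      ∀ s : ℝ → ℝ, (∀ ξ, 0 ≤ s ξ) →
        MemLp s p (volume.restrict (Set.Ioc (0:ℝ) 1)) →
        ∀ M : ℕ, 1 ≤ M →
          (∫ ξ in (0:ℝ)..1,
              |2 * Real.sin (π * ξ)| ^ (2 * m) *
                |Real.sin (π * M * ξ) / (M * Real.sin (π * ξ))| ^ (2 * (m + 1)) * s ξ)
            ≤ C * (eLpNorm s p (volume.restrict (Set.Ioc (0:ℝ) 1))).toReal *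
                (M : ℝ) ^ (-(2 * (m : ℝ) + 1 - (1 / p).toReal)) := by
  refine ⟨2 ^ (2 * m + 1), by positivity, fun s _ hs M hM => ?_⟩
  obtain ⟨q, hqp⟩ := ENNReal.exists_holderConjugate hp
  have hθ : (1 / q).toReal = 1 - (1 / p).toReal := by
    rw [one_div, one_div, ← hqp.symm.one_sub_inv,
      toReal_sub_of_le (ENNReal.inv_le_one.2 hp) one_ne_top, toReal_one]
  have hF := eLpNorm_filteredNoiseKernel_le m hM hqp.one_le
  have hF_memLp : MemLp (filteredNoiseKernel m M) q (volume.restrict (Ioc 0 1)) :=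
    ⟨(measurable_filteredNoiseKernel m M).aestronglyMeasurable, hF.trans_lt ofReal_lt_top⟩
  calc ∫ ξ in (0:ℝ)..1, filteredNoiseKernel m M ξ * s ξ
      = ∫ ξ in Ioc 0 1, filteredNoiseKernel m M ξ * s ξ :=
        intervalIntegral.integral_of_le zero_le_one
    _ ≤ (eLpNorm (filteredNoiseKernel m M) q (volume.restrict (Ioc 0 1))).toReal *
          (eLpNorm s p (volume.restrict (Ioc 0 1))).toReal :=
        integral_mul_le_eLpNorm_mul_eLpNorm hF_memLp hs
    _ ≤ 2 ^ (2 * m + 1) * (M : ℝ) ^ (-(2 * (m : ℝ) + 1 - (1 / p).toReal)) *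
          (eLpNorm s p (volume.restrict (Ioc 0 1))).toReal := by
        gcongr
        refine toReal_le_of_le_ofReal (by positivity) (hF.trans (ofReal_le_ofReal ?_))
        convert two_div_pow_mul_rpow_le (M := M) (by positivity) (2 * m) (θ := (1 / q).toReal) ?_
          using 3
        · push_cast; rw [hθ]; ring
        · rw [hθ]; linarith [toReal_nonneg (a := 1 / p)]
    _ = _ := by ring

/-- for `m ≥ 1`, `1 ≤ p ≤ ∞` and any nonnegative spectral density
`s ∈ L^p(𝕋)`, the absolutely continuous mean square error after `sinc^{m+1}` filtering
of length `M` satisfies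
`∫₀¹ |2 sin(πξ)|^{2m} |Sinc^{m+1}_M(ξ)|² s(ξ) dξ ≤ C ‖s‖_{L^p} M^{−(2m+1−1/p)}`
with `C = C(m, p)`. -/
theorem ac_mse_Lp_bound (m : ℕ) (hm : 1 ≤ m) (p : ℝ≥0∞) (hp : 1 ≤ p) :
    ∃ C : ℝ, 0 < C ∧
      ∀ s : ℝ → ℝ, (∀ ξ, 0 ≤ s ξ) →
        MemLp s p (volume.restrict (Set.Ioc (0:ℝ) 1)) →
        ∀ M : ℕ, 1 ≤ M →
          (∫ ξ in (0:ℝ)..1,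
              |2 * Real.sin (π * ξ)| ^ (2 * m) *
                |Real.sin (π * M * ξ) / (M * Real.sin (π * ξ))| ^ (2 * (m + 1)) * s ξ)
            ≤ C * (eLpNorm s p (volume.restrict (Set.Ioc (0:ℝ) 1))).toReal *
                (M : ℝ) ^ (-(2 * (m : ℝ) + 1 - (1 / p).toReal)) :=
  ac_mse_Lp_bound_general m p hp
end
end

section
/- For all integers m ≥ 1 and M ≥ 1: ∫₀¹ |2 sin(π ξ)|^{2m} · |sin(π M ξ)/(M sin(π ξ))|^{2(m+1)} dξ = C(2m, m) · M^{−2m−1}, where C(2m, m) is the central binomial coefficient '2m choose m'. -/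
open MeasureTheory Real

noncomputable section

open Finset

namespace SincAux

noncomputable def E (n : ℤ) (ξ : ℝ) : ℂ := Complex.exp (2 * Real.pi * n * ξ * Complex.I)

lemma E_int (n : ℤ) (k : ℤ) : E n (k : ℝ) = 1 := by
  rw [E]
  have h : (2 * (Real.pi:ℂ) * (n:ℂ) * ((k:ℝ):ℂ) * Complex.I)
      = ((n*k : ℤ) : ℂ) * (2 * (Real.pi:ℂ) * Complex.I) := by push_cast; ring
  rw [h, Complex.exp_int_mul_two_pi_mul_I]

lemma continuous_E (n : ℤ) : Continuous (E n) := by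
  unfold E; fun_prop

lemma integral_E (n : ℤ) : (∫ ξ in (0:ℝ)..1, E n ξ) = if n = 0 then 1 else 0 := by
  by_cases h : n = 0
  · simp [h, E]
  · rw [if_neg h]
    have hc : (2 * (Real.pi:ℂ) * (n:ℂ) * Complex.I) ≠ 0 := by
      refine mul_ne_zero (mul_ne_zero (mul_ne_zero two_ne_zero ?_) ?_) Complex.I_ne_zero
      · exact_mod_cast Real.pi_ne_zero
      · exact_mod_cast h
    have heq : ∀ ξ : ℝ, E n ξ = Complex.exp ((2 * (Real.pi:ℂ) * (n:ℂ) * Complex.I) * ξ) := by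
      intro ξ; rw [E]; ring_nf
    simp only [heq]
    rw [integral_exp_mul_complex hc]
    have h1 : (2 * (Real.pi:ℂ) * (n:ℂ) * Complex.I) * (1:ℝ) = (n:ℤ) * (2 * Real.pi * Complex.I) := by
      push_cast; ring
    have h0 : (2 * (Real.pi:ℂ) * (n:ℂ) * Complex.I) * (0:ℝ) = 0 := by push_cast; ring
    rw [h1, h0, Complex.exp_int_mul_two_pi_mul_I, Complex.exp_zero, sub_self, zero_div]

lemma exp_sub_exp (w : ℂ) :
    Complex.exp (w * Complex.I) - Complex.exp (-(w * Complex.I))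
      = 2 * Complex.I * Complex.sin w := by
  rw [Complex.exp_mul_I, ← neg_mul, Complex.exp_mul_I, Complex.cos_neg, Complex.sin_neg]
  ring

lemma sin_nat_mul (M : ℕ) (z : ℂ) :
    Complex.sin ((M:ℂ) * z)
      = Complex.sin z * ∑ k ∈ range M, Complex.exp ((2*(k:ℂ) + 1 - M) * z * Complex.I) := by
  have h2I : (2 * Complex.I) ≠ 0 := by
    simp [Complex.I_ne_zero]
  apply mul_left_cancel₀ h2I
  calc 2 * Complex.I * Complex.sin ((M:ℂ) * z)
      = Complex.exp (((M:ℂ)*z) * Complex.I) - Complex.exp (-(((M:ℂ)*z) * Complex.I)) := by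
        rw [exp_sub_exp]
    _ = (fun k : ℕ => Complex.exp ((2*(k:ℂ) - M) * z * Complex.I)) M
        - (fun k : ℕ => Complex.exp ((2*(k:ℂ) - M) * z * Complex.I)) 0 := by
        simp only
        congr 2 <;> push_cast <;> ring
    _ = ∑ k ∈ range M,
          ((fun k : ℕ => Complex.exp ((2*(k:ℂ) - M) * z * Complex.I)) (k+1)
            - (fun k : ℕ => Complex.exp ((2*(k:ℂ) - M) * z * Complex.I)) k) :=
        (Finset.sum_range_sub (fun k : ℕ => Complex.exp ((2*(k:ℂ) - M) * z * Complex.I)) M).symm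
    _ = ∑ k ∈ range M,
          ((Complex.exp (z * Complex.I) - Complex.exp (-(z * Complex.I))) *
            Complex.exp ((2*(k:ℂ) + 1 - M) * z * Complex.I)) := by
        refine Finset.sum_congr rfl fun k _ => ?_
        simp only [sub_mul, ← Complex.exp_add]
        congr 2 <;> push_cast <;> ring
    _ = 2 * Complex.I * (Complex.sin z *
          ∑ k ∈ range M, Complex.exp ((2*(k:ℂ) + 1 - M) * z * Complex.I)) := by
        simp only [exp_sub_exp]
        rw [Finset.mul_sum, Finset.mul_sum]
        exact Finset.sum_congr rfl fun k _ => by ring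

lemma two_sin_pow (m : ℕ) (z : ℂ) :
    (2 * Complex.sin z) ^ (2*m)
      = ∑ r ∈ range (2*m+1),
          ((-1:ℂ)^(m+r) * ((2*m).choose r : ℂ)) *
            Complex.exp ((2*(r:ℂ) - 2*m) * z * Complex.I) := by
  have hcancel : -Complex.I * (2*Complex.I*Complex.sin z) = 2*Complex.sin z := by
    rw [show -Complex.I * (2*Complex.I*Complex.sin z)
      = -(Complex.I*Complex.I)*(2*Complex.sin z) by ring, Complex.I_mul_I]
    ring
  have key : 2 * Complex.sin z
      = -Complex.I * (Complex.exp (z * Complex.I) + -Complex.exp (-(z * Complex.I))) := by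
    rw [← sub_eq_add_neg, exp_sub_exp]
    exact hcancel.symm
  rw [key, mul_pow, add_pow, Finset.mul_sum]
  refine Finset.sum_congr rfl fun r hr => ?_
  have hrle : r ≤ 2*m := Nat.lt_succ_iff.mp (Finset.mem_range.mp hr)
  have e1 : Complex.exp (z*Complex.I) ^ r = Complex.exp ((r:ℂ) * (z*Complex.I)) :=
    (Complex.exp_nat_mul _ r).symm
  have e2 : (-Complex.exp (-(z*Complex.I))) ^ (2*m - r)
      = (-1:ℂ)^(2*m-r) * Complex.exp (((2*m-r : ℕ):ℂ) * -(z*Complex.I)) := by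
    rw [neg_pow, Complex.exp_nat_mul]
  have hIpow : (-Complex.I) ^ (2*m) = (-1:ℂ)^m := by
    rw [pow_mul]
    norm_num [Complex.I_sq]
  rw [e1, e2, hIpow]
  have hexp : Complex.exp ((r:ℂ) * (z * Complex.I))
        * Complex.exp (((2*m - r : ℕ):ℂ) * -(z * Complex.I))
      = Complex.exp ((2*(r:ℂ) - 2*m) * z * Complex.I) := by
    rw [← Complex.exp_add]
    congr 1
    have hc : ((2*m - r : ℕ):ℂ) = 2*(m:ℂ) - r := by
      push_cast [Nat.cast_sub hrle]
      try ring
    rw [hc]; ring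
  have hsign : (-1:ℂ)^m * (-1:ℂ)^(2*m - r) = (-1:ℂ)^(m+r) := by
    rw [← pow_add, neg_one_pow_eq_pow_mod_two, neg_one_pow_eq_pow_mod_two (n := m+r)]
    congr 1
    omega
  calc (-1:ℂ)^m * (Complex.exp ((r:ℂ) * (z * Complex.I))
        * ((-1:ℂ)^(2*m-r) * Complex.exp (((2*m-r : ℕ):ℂ) * -(z * Complex.I))) * ((2*m).choose r : ℂ))
      = ((-1:ℂ)^m * (-1:ℂ)^(2*m-r)) * ((2*m).choose r : ℂ)
        * (Complex.exp ((r:ℂ) * (z * Complex.I))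
            * Complex.exp (((2*m - r : ℕ):ℂ) * -(z * Complex.I))) := by ring
    _ = ((-1:ℂ)^(m+r) * ((2*m).choose r : ℂ)) * Complex.exp ((2*(r:ℂ) - 2*m) * z * Complex.I) := by
        rw [hsign, hexp]

lemma sum_c_zero (m : ℕ) (hm : 1 ≤ m) :
    ∑ r ∈ range (2*m+1), ((-1:ℂ)^(m+r) * ((2*m).choose r : ℂ)) = 0 := by
  have h : ∑ r ∈ range (2*m+1), ((-1:ℂ)^(m+r) * ((2*m).choose r : ℂ))
      = (-1:ℂ)^m * ∑ r ∈ range (2*m+1), ((-1:ℂ)^r * ((2*m).choose r : ℂ)) := by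
    rw [Finset.mul_sum]
    exact Finset.sum_congr rfl fun r _ => by rw [pow_add]; ring
  have h2 : (∑ i ∈ range (2*m+1), ((-1)^i * ((2*m).choose i) : ℤ)) = 0 :=
    Int.alternating_sum_range_choose_of_ne (by omega)
  have h3 : ∑ r ∈ range (2*m+1), ((-1:ℂ)^r * ((2*m).choose r : ℂ)) = 0 := by
    have := congrArg (Int.cast : ℤ → ℂ) h2
    push_cast at this
    exact this
  rw [h, h3, mul_zero]

end SincAux

open SincAux

lemma count_sum (m M : ℕ) (hm : 1 ≤ m) (hM : 1 ≤ M) :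
    ∑ r ∈ range (2*m+1), ∑ j ∈ range M, ∑ k ∈ range M,
      ((-1:ℂ)^(m+r) * ((2*m).choose r : ℂ)) *
        (if ((M:ℤ)*((r:ℤ)-(m:ℤ)) + ((j:ℤ)+(k:ℤ)) - ((M:ℤ)-1) = 0) then (1:ℂ) else 0)
      = (M:ℂ) * ((2*m).choose m : ℂ) := by
  rw [Finset.sum_eq_single_of_mem m (Finset.mem_range.mpr (by omega))]
  · have hsgn : ((-1:ℂ)^(m+m) * ((2*m).choose m : ℂ)) = ((2*m).choose m : ℂ) := by
      rw [Even.neg_one_pow ⟨m, rfl⟩, one_mul]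
    have hinner : ∀ j ∈ range M,
        (∑ k ∈ range M, ((-1:ℂ)^(m+m) * ((2*m).choose m : ℂ)) *
          (if ((M:ℤ)*((m:ℤ)-(m:ℤ)) + ((j:ℤ)+(k:ℤ)) - ((M:ℤ)-1) = 0) then (1:ℂ) else 0))
        = ((2*m).choose m : ℂ) := by
      intro j hj
      have hjM : j < M := Finset.mem_range.mp hj
      have hcond : ∀ k : ℕ,
          (((M:ℤ)*((m:ℤ)-(m:ℤ)) + ((j:ℤ)+(k:ℤ)) - ((M:ℤ)-1) = 0)) ↔ (k = M - 1 - j) := by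
        intro k
        rw [sub_self, mul_zero, zero_add]
        omega
      calc ∑ k ∈ range M, ((-1:ℂ)^(m+m) * ((2*m).choose m : ℂ)) *
            (if ((M:ℤ)*((m:ℤ)-(m:ℤ)) + ((j:ℤ)+(k:ℤ)) - ((M:ℤ)-1) = 0) then (1:ℂ) else 0)
          = ∑ k ∈ range M, (if k = M - 1 - j then ((-1:ℂ)^(m+m) * ((2*m).choose m : ℂ)) else 0) := by
            refine Finset.sum_congr rfl fun k _ => ?_
            rw [if_congr (hcond k) rfl rfl, mul_ite, mul_one, mul_zero]
        _ = ((2*m).choose m : ℂ) := by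
            rw [Finset.sum_ite_eq' (range M) (M - 1 - j)
              (fun _ => ((-1:ℂ)^(m+m) * ((2*m).choose m : ℂ))),
              if_pos (Finset.mem_range.mpr (by omega)), hsgn]
    rw [Finset.sum_congr rfl hinner, Finset.sum_const, Finset.card_range, nsmul_eq_mul]
  · intro r hr hrm
    have hrlt : r < 2*m+1 := Finset.mem_range.mp hr
    refine Finset.sum_eq_zero fun j hj => Finset.sum_eq_zero fun k hk => ?_
    have hjM : j < M := Finset.mem_range.mp hj
    have hkM : k < M := Finset.mem_range.mp hk
    have hfalse : ¬ ((M:ℤ)*((r:ℤ)-(m:ℤ)) + ((j:ℤ)+(k:ℤ)) - ((M:ℤ)-1) = 0) := by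
      rcases lt_or_gt_of_ne hrm with h | h
      · have h1 : ((r:ℤ)-(m:ℤ)) ≤ -1 := by omega
        have h2 : (M:ℤ)*((r:ℤ)-(m:ℤ)) ≤ (M:ℤ)*(-1) :=
          mul_le_mul_of_nonneg_left h1 (by omega)
        omega
      · have h1 : (1:ℤ) ≤ ((r:ℤ)-(m:ℤ)) := by omega
        have h2 : (M:ℤ)*1 ≤ (M:ℤ)*((r:ℤ)-(m:ℤ)) :=
          mul_le_mul_of_nonneg_left h1 (by omega)
        omega
    rw [if_neg hfalse, mul_zero]

lemma pointwise (m M : ℕ) (hm : 1 ≤ m) (hM : 1 ≤ M) (ξ : ℝ) :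
    ((|2 * Real.sin (π * ξ)| ^ (2*m) *
        |Real.sin (π * M * ξ) / (M * Real.sin (π * ξ))| ^ (2*(m+1)) : ℝ) : ℂ)
      = (∑ r ∈ range (2*m+1), ∑ j ∈ range M, ∑ k ∈ range M,
          ((-1:ℂ)^(m+r) * ((2*m).choose r : ℂ)) *
            E ((M:ℤ)*((r:ℤ)-(m:ℤ)) + ((j:ℤ)+(k:ℤ)) - ((M:ℤ)-1)) ξ) / (M:ℂ)^(2*m+2) := by
  by_cases hs : Real.sin (π * ξ) = 0
  · obtain ⟨n, hn⟩ := Real.sin_eq_zero_iff.mp hs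
    have hπn : π * ξ = π * (n:ℝ) := by linarith [hn]
    have hξ : ξ = (n:ℝ) := mul_left_cancel₀ Real.pi_ne_zero hπn
    subst hξ
    have hE : ∀ r j k : ℕ,
        E ((M:ℤ)*((r:ℤ)-(m:ℤ)) + ((j:ℤ)+(k:ℤ)) - ((M:ℤ)-1)) ((n:ℤ):ℝ) = 1 :=
      fun r j k => E_int _ n
    have hall : ∀ r ∈ range (2*m+1),
        (∑ j ∈ range M, ∑ k ∈ range M, ((-1:ℂ)^(m+r) * ((2*m).choose r : ℂ)) *
          E ((M:ℤ)*((r:ℤ)-(m:ℤ)) + ((j:ℤ)+(k:ℤ)) - ((M:ℤ)-1)) ((n:ℤ):ℝ))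
        = ((M:ℂ)*(M:ℂ)) * ((-1:ℂ)^(m+r) * ((2*m).choose r : ℂ)) := by
      intro r _
      simp only [hE, mul_one, Finset.sum_const, Finset.card_range, nsmul_eq_mul]
      ring
    rw [Finset.sum_congr rfl hall, ← Finset.mul_sum, sum_c_zero m hm, mul_zero, zero_div]
    rw [hs]
    simp [zero_pow (show 2*m ≠ 0 by omega)]
  · have habs1 : |2 * Real.sin (π * ξ)| ^ (2*m) = (2 * Real.sin (π * ξ))^(2*m) :=
      Even.pow_abs ⟨m, by ring⟩ _
    have habs2 : |Real.sin (π * M * ξ) / (M * Real.sin (π * ξ))| ^ (2*(m+1))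
        = (Real.sin (π * M * ξ) / (M * Real.sin (π * ξ)))^(2*(m+1)) :=
      Even.pow_abs ⟨m+1, by ring⟩ _
    rw [habs1, habs2]
    push_cast
    set z : ℂ := (π:ℂ) * ξ with hz
    have hzn : Complex.sin z ≠ 0 := by
      rw [hz]
      have : ((π:ℝ) * ξ : ℝ) = ((π:ℂ) * ξ : ℂ) := by push_cast; ring
      rw [show (π:ℂ) * (ξ:ℂ) = (((π:ℝ) * ξ : ℝ) : ℂ) by push_cast; ring,
        ← Complex.ofReal_sin]
      exact Complex.ofReal_ne_zero.mpr hs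
    have hM0 : (M:ℂ) ≠ 0 := Nat.cast_ne_zero.mpr (by omega)
    have hw : Complex.sin ((π:ℂ) * (M:ℂ) * (ξ:ℂ)) = Complex.sin ((M:ℂ) * z) := by
      rw [hz]; congr 1; ring
    set S : ℂ := ∑ k ∈ range M, Complex.exp ((2*(k:ℂ) + 1 - M) * z * Complex.I) with hS
    have hsinM : Complex.sin ((M:ℂ) * z) = Complex.sin z * S := sin_nat_mul M z
    have hfrac : Complex.sin ((π:ℂ) * (M:ℂ) * (ξ:ℂ)) / ((M:ℂ) * Complex.sin z) = S / M := by
      rw [hw, hsinM]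
      field_simp
    rw [hfrac, div_pow]
    have key : (2 * Complex.sin z) ^ (2*m) * S ^ (2*(m+1))
        = ∑ r ∈ range (2*m+1), ∑ j ∈ range M, ∑ k ∈ range M,
            ((-1:ℂ)^(m+r) * ((2*m).choose r : ℂ)) *
              E ((M:ℤ)*((r:ℤ)-(m:ℤ)) + ((j:ℤ)+(k:ℤ)) - ((M:ℤ)-1)) ξ := by
      have hpow : S ^ (2*(m+1)) = S ^ (2*m) * (S * S) := by
        rw [show 2*(m+1) = 2*m+1+1 by ring, pow_succ, pow_succ, mul_assoc]
      have hS2 : S * S = ∑ j ∈ range M, ∑ k ∈ range M,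
          Complex.exp (((2*(j:ℂ)+1-M) + (2*(k:ℂ)+1-M)) * z * Complex.I) := by
        rw [hS, Finset.sum_mul_sum]
        refine Finset.sum_congr rfl fun j _ => Finset.sum_congr rfl fun k _ => ?_
        rw [← Complex.exp_add]
        congr 1
        ring
      calc (2 * Complex.sin z) ^ (2*m) * S ^ (2*(m+1))
          = ((2 * Complex.sin z) * S) ^ (2*m) * (S * S) := by
            rw [hpow, mul_pow]; ring
        _ = (2 * Complex.sin ((M:ℂ) * z)) ^ (2*m) * (S * S) := by
            rw [hsinM]; ring_nf
        _ = (∑ r ∈ range (2*m+1), ((-1:ℂ)^(m+r) * ((2*m).choose r : ℂ)) *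
              Complex.exp ((2*(r:ℂ) - 2*m) * ((M:ℂ)*z) * Complex.I))
            * ∑ j ∈ range M, ∑ k ∈ range M,
              Complex.exp (((2*(j:ℂ)+1-M) + (2*(k:ℂ)+1-M)) * z * Complex.I) := by
            rw [two_sin_pow m ((M:ℂ)*z), hS2]
        _ = ∑ r ∈ range (2*m+1), ∑ j ∈ range M, ∑ k ∈ range M,
            ((-1:ℂ)^(m+r) * ((2*m).choose r : ℂ)) *
              E ((M:ℤ)*((r:ℤ)-(m:ℤ)) + ((j:ℤ)+(k:ℤ)) - ((M:ℤ)-1)) ξ := by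
            rw [Finset.sum_mul]
            refine Finset.sum_congr rfl fun r _ => ?_
            rw [Finset.mul_sum]
            refine Finset.sum_congr rfl fun j _ => ?_
            rw [Finset.mul_sum]
            refine Finset.sum_congr rfl fun k _ => ?_
            rw [mul_assoc, ← Complex.exp_add, E]
            congr 2
            rw [hz]
            push_cast
            ring
    rw [← key, show (2*(m+1)) = 2*m+2 by ring, mul_div_assoc]



/-- for all `m ≥ 1` and `M ≥ 1`,
`∫₀¹ |2 sin(πξ)|^{2m} |sin(πMξ)/(M sin(πξ))|^{2(m+1)} dξ = C(2m, m) M^{−2m−1}`,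
where `C(2m, m)` is the central binomial coefficient. -/
theorem sinc_filter_exact_integral (m M : ℕ) (hm : 1 ≤ m) (hM : 1 ≤ M) :
    (∫ ξ in (0:ℝ)..1,
        |2 * Real.sin (π * ξ)| ^ (2 * m) *
          |Real.sin (π * M * ξ) / (M * Real.sin (π * ξ))| ^ (2 * (m + 1)))
      = (Nat.choose (2 * m) m : ℝ) / (M : ℝ) ^ (2 * m + 1) := by
  have hMc : (M:ℂ) ≠ 0 := Nat.cast_ne_zero.mpr (by omega)
  have contF : ∀ (c:ℂ) (n:ℤ), Continuous (fun ξ : ℝ => c * E n ξ) :=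
    fun c n => continuous_const.mul (continuous_E n)
  have hnum : (∫ ξ in (0:ℝ)..1, ∑ r ∈ range (2*m+1), ∑ j ∈ range M, ∑ k ∈ range M,
        ((-1:ℂ)^(m+r) * ((2*m).choose r : ℂ)) *
          E ((M:ℤ)*((r:ℤ)-(m:ℤ)) + ((j:ℤ)+(k:ℤ)) - ((M:ℤ)-1)) ξ)
      = (M:ℂ) * ((2*m).choose m : ℂ) := by
    rw [intervalIntegral.integral_finset_sum (fun r _ =>
      ((continuous_finset_sum _ (fun j _ => continuous_finset_sum _
        (fun k _ => contF _ _))).intervalIntegrable 0 1))]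
    rw [Finset.sum_congr rfl (fun r _ => intervalIntegral.integral_finset_sum (fun j _ =>
      ((continuous_finset_sum _ (fun k _ => contF _ _)).intervalIntegrable 0 1)))]
    rw [Finset.sum_congr rfl (fun r _ => Finset.sum_congr rfl (fun j _ =>
      intervalIntegral.integral_finset_sum (fun k _ => (contF _ _).intervalIntegrable 0 1)))]
    rw [Finset.sum_congr rfl (fun r _ => Finset.sum_congr rfl (fun j _ =>
      Finset.sum_congr rfl (fun k _ => by
        rw [intervalIntegral.integral_const_mul, integral_E])))]
    exact count_sum m M hm hM
  have hC : ((∫ ξ in (0:ℝ)..1,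
        |2 * Real.sin (π * ξ)| ^ (2 * m) *
          |Real.sin (π * M * ξ) / (M * Real.sin (π * ξ))| ^ (2 * (m + 1)) : ℝ) : ℂ)
      = (M:ℂ) * ((2*m).choose m : ℂ) / (M:ℂ)^(2*m+2) := by
    rw [← intervalIntegral.integral_ofReal]
    rw [intervalIntegral.integral_congr (fun ξ _ => pointwise m M hm hM ξ)]
    rw [intervalIntegral.integral_div, hnum]
  have final : ((∫ ξ in (0:ℝ)..1,
        |2 * Real.sin (π * ξ)| ^ (2 * m) *
          |Real.sin (π * M * ξ) / (M * Real.sin (π * ξ))| ^ (2 * (m + 1)) : ℝ) : ℂ)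
      = (((Nat.choose (2 * m) m : ℝ) / (M : ℝ) ^ (2 * m + 1) : ℝ) : ℂ) := by
    rw [hC]
    push_cast
    rw [show (2*m+2) = (2*m+1)+1 by ring, pow_succ]
    field_simp
  exact_mod_cast final
end
end

section
/- Let f : ℝ → ℝ be 1-periodic with absolutely convergent Fourier series and mean zero, i.e. f(v) = Σ_{n≠0} f̂[n] e^{2πi n v} with ‖f‖_{A(𝕋)} := Σ_n |f̂[n]| < ∞ and f̂[0] = 0. Let φ : ℝ → ℝ be 1-periodic of bounded variation, with total variation ‖φ‖_{TV} over one period. For k ∈ ℤ define c[k] = ∫₀¹ f(k v + φ(v)) dv. Then for every k ∈ ℤ∖{0}: |c[k]| ≤ (1/|k|) · ‖f‖_{A(𝕋)} · ‖φ‖_{TV}. -/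
/-!
Expand `f` in its Fourier series and integrate termwise: the `n`-th mode contributes
`a n * ∫₀¹ e(nkv) e(nφ(v)) dv`, where `e(x) = exp(2πix)`. For `g` of bounded variation
with `g 1 = g 0` one has `‖∫₀¹ e(Nv) g(v) dv‖ ≤ Var g / (2π|N|)`: on a partition of mesh `δ`,
replacing `g` by its value at the left end of each cell costs at most `Var g · δ`, and the
resulting Riemann–Stieltjes sum is summed by parts, the boundary terms cancelling because
`e(N·) g` takes the same value at `0` and `1`. As `e` is `2π`-Lipschitz,
`Var e(nφ) ≤ 2π|n| Var φ`, so the `n`-th mode is at most `‖a n‖ Var φ / |k|`.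
-/

open MeasureTheory Real Set
open scoped Interval

theorem BoundedVariationOn.intervalIntegrable {f : ℝ → ℝ} {a b : ℝ}
    (hf : BoundedVariationOn f (uIcc a b)) : IntervalIntegrable f volume a b := by
  obtain ⟨p, q, hp, hq, rfl⟩ := hf.locallyBoundedVariationOn.exists_monotoneOn_sub_monotoneOn
  exact hp.intervalIntegrable.sub hq.intervalIntegrable

theorem lipschitzWith_exp_mul_I (b : ℝ) :
    LipschitzWith ‖b‖₊ fun x : ℝ => Complex.exp (↑(b * x) * Complex.I) := by
  simpa [circleMap, Function.comp_def] using
    (lipschitzWith_circleMap 0 1).comp (lipschitzWith_smul b)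

theorem sum_range_mul_sub_eq_neg {R : Type*} [Ring R] (x y : ℕ → R) (m : ℕ)
    (h : x m * y m = x 0 * y 0) :
    ∑ j ∈ Finset.range m, x j * (y (j + 1) - y j)
      = -∑ j ∈ Finset.range m, (x (j + 1) - x j) * y (j + 1) := by
  have htel := Finset.sum_range_sub (fun j => x j * y j) m
  rw [h, sub_self] at htel
  rw [eq_neg_iff_add_eq_zero, ← Finset.sum_add_distrib, ← htel]
  refine Finset.sum_congr rfl fun j _ => ?_
  noncomm_ring

theorem norm_sum_range_mul_sub_le {R : Type*} [NormedRing R] (x y : ℕ → R) (m : ℕ)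
    (hy : ∀ j, ‖y j‖ ≤ 1) (h : x m * y m = x 0 * y 0) :
    ‖∑ j ∈ Finset.range m, x j * (y (j + 1) - y j)‖
      ≤ ∑ j ∈ Finset.range m, ‖x (j + 1) - x j‖ := by
  rw [sum_range_mul_sub_eq_neg x y m h, norm_neg]
  refine (norm_sum_le _ _).trans (Finset.sum_le_sum fun j _ => ?_)
  exact (norm_mul_le _ _).trans (mul_le_of_le_one_right (norm_nonneg _) (hy _))

theorem sum_norm_sub_le_eVariationOn {E : Type*} [SeminormedAddCommGroup E] {g : ℝ → E}
    {t : ℕ → ℝ} (ht : Monotone t) (m : ℕ) (hg : BoundedVariationOn g (Icc (t 0) (t m))) :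
    ∑ j ∈ Finset.range m, ‖g (t (j + 1)) - g (t j)‖
      ≤ (eVariationOn g (Icc (t 0) (t m))).toReal := by
  have hsum := eVariationOn.sum_le_of_monotoneOn_Icc (f := g) (s := Icc (t 0) (t m)) (m := 0)
    (n := m) (ht.monotoneOn _) (fun i hi => ⟨ht (Nat.zero_le i), ht hi.2⟩)
  rw [← Finset.range_eq_Ico] at hsum
  refine le_of_eq_of_le ?_ (ENNReal.toReal_mono hg hsum)
  rw [ENNReal.toReal_sum fun _ _ => edist_ne_top _ _]
  simp [edist_dist, dist_eq_norm]

theorem norm_integral_mul_sub_le_eVariationOn {E : Type*} [NormedRing E] [NormedSpace ℝ E]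
    {g w : ℝ → E} {a b : ℝ} (hab : a ≤ b)
    (hg : BoundedVariationOn g (Icc a b)) (hw : ∀ v, ‖w v‖ ≤ 1) :
    ‖∫ v in a..b, w v * (g v - g a)‖ ≤ (eVariationOn g (Icc a b)).toReal * (b - a) := by
  rw [← abs_of_nonneg (sub_nonneg.2 hab)]
  refine intervalIntegral.norm_integral_le_of_norm_le_const fun v hv => ?_
  rw [uIoc_of_le hab] at hv
  refine (norm_mul_le _ _).trans (mul_le_of_le_one_left (norm_nonneg _) (hw v) |>.trans ?_)
  rw [← dist_eq_norm]
  exact hg.dist_le ⟨hv.1.le, hv.2⟩ (left_mem_Icc.2 hab)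

theorem norm_integral_exp_mul_le_of_partition {g : ℝ → ℂ} {N : ℤ} (hN : N ≠ 0)
    (hg : BoundedVariationOn g (Icc 0 1)) (hg1 : g 1 = g 0)
    (hint : IntervalIntegrable g volume 0 1) {t : ℕ → ℝ} (ht : Monotone t) {m : ℕ}
    (ht0 : t 0 = 0) (htm : t m = 1) {δ : ℝ} (hδ : ∀ j < m, t (j + 1) - t j ≤ δ) :
    ‖∫ v in (0 : ℝ)..1, Complex.exp (2 * π * Complex.I * N * v) * g v‖
      ≤ (eVariationOn g (Icc 0 1)).toReal / (2 * π * |(N : ℝ)|)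
        + (eVariationOn g (Icc 0 1)).toReal * δ := by
  set c : ℂ := 2 * π * Complex.I * N with hc
  set E : ℝ → ℂ := fun v => Complex.exp (c * v) with hE
  have hc0 : c ≠ 0 := by simp [hc, hN, pi_ne_zero]
  have hnorm_c : ‖c‖ = 2 * π * |(N : ℝ)| := by simp [hc, abs_of_pos pi_pos]
  have hE_norm : ∀ v, ‖E v‖ = 1 := fun v => by simp [hE, hc, Complex.norm_exp]
  have hE1 : E 1 = E 0 := by
    simp only [hE, hc, Complex.ofReal_one, Complex.ofReal_zero, mul_one, mul_zero,
      Complex.exp_zero]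
    simpa [mul_comm, mul_assoc, mul_left_comm] using Complex.exp_int_mul_two_pi_mul_I N
  have ht_mem : ∀ j ≤ m, t j ∈ Icc (0 : ℝ) 1 := fun j hj =>
    ⟨ht0 ▸ ht (Nat.zero_le j), htm ▸ ht hj⟩
  have hsub : ∀ j < m, Icc (t j) (t (j + 1)) ⊆ Icc 0 1 := fun j hj =>
    Icc_subset_Icc (ht_mem j hj.le).1 (ht_mem (j + 1) hj).2
  have hEg_int : ∀ j < m, IntervalIntegrable (fun v => E v * g v) volume (t j) (t (j + 1)) :=
    fun j hj => by
      refine (hint.mono_set ?_).continuousOn_mul (by simp only [hE]; fun_prop)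
      rw [uIcc_of_le (ht (Nat.le_succ j)), uIcc_of_le zero_le_one]
      exact hsub j hj
  have hcell : ∀ j ∈ Finset.range m, ∫ v in t j..t (j + 1), E v * g v
      = g (t j) * (E (t (j + 1)) - E (t j)) / c
        + ∫ v in t j..t (j + 1), E v * (g v - g (t j)) := by
    intro j hj
    have hE_int : IntervalIntegrable E volume (t j) (t (j + 1)) := by
      apply Continuous.intervalIntegrable; fun_prop
    rw [mul_div_assoc, ← integral_exp_mul_complex hc0, ← intervalIntegral.integral_const_mul,
      ← sub_eq_iff_eq_add', ← intervalIntegral.integral_sub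
        (hEg_int j (Finset.mem_range.1 hj)) (hE_int.const_mul _)]
    exact intervalIntegral.integral_congr fun v _ => by ring
  rw [← ht0, ← htm, ← intervalIntegral.sum_integral_adjacent_intervals hEg_int,
    Finset.sum_congr rfl hcell, Finset.sum_add_distrib, ht0, htm]
  refine (norm_add_le _ _).trans (add_le_add ?_ ?_)
  · rw [← Finset.sum_div, norm_div, hnorm_c]
    gcongr
    refine (norm_sum_range_mul_sub_le (fun j => g (t j)) (fun j => E (t j)) m
      (fun j => (hE_norm _).le) (by simp only [ht0, htm, hg1, hE1])).trans ?_
    simpa [ht0, htm] using sum_norm_sub_le_eVariationOn ht m (by rwa [ht0, htm])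
  · have hVj : ∀ j ∈ Finset.range m, eVariationOn g (Icc (t j) (t (j + 1))) ≠ ⊤ :=
      fun j hj => hg.mono (hsub j (Finset.mem_range.1 hj))
    calc ‖∑ j ∈ Finset.range m, ∫ v in t j..t (j + 1), E v * (g v - g (t j))‖
        ≤ ∑ j ∈ Finset.range m, (eVariationOn g (Icc (t j) (t (j + 1)))).toReal * δ := by
          refine (norm_sum_le _ _).trans (Finset.sum_le_sum fun j hj => ?_)
          have hj' := Finset.mem_range.1 hj
          refine (norm_integral_mul_sub_le_eVariationOn (ht (Nat.le_succ j)) (hVj j hj)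
            (fun v => (hE_norm v).le)).trans ?_
          exact mul_le_mul_of_nonneg_left (hδ j hj') ENNReal.toReal_nonneg
      _ = (eVariationOn g (Icc 0 1)).toReal * δ := by
          rw [← Finset.sum_mul, ← ENNReal.toReal_sum hVj, eVariationOn.sum' g ht, ht0, htm]

theorem norm_integral_exp_mul_le_eVariationOn {g : ℝ → ℂ} {N : ℤ} (hN : N ≠ 0)
    (hg : BoundedVariationOn g (Icc 0 1)) (hg1 : g 1 = g 0)
    (hint : IntervalIntegrable g volume 0 1) :
    ‖∫ v in (0 : ℝ)..1, Complex.exp (2 * π * Complex.I * N * v) * g v‖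
      ≤ (eVariationOn g (Icc 0 1)).toReal / (2 * π * |(N : ℝ)|) := by
  set V := (eVariationOn g (Icc 0 1)).toReal
  have hlim : Filter.Tendsto (fun m : ℕ => V / (2 * π * |(N : ℝ)|) + V * (1 / m))
      Filter.atTop (nhds (V / (2 * π * |(N : ℝ)|))) := by
    simpa using tendsto_const_nhds.add (tendsto_one_div_atTop_nhds_zero_nat.const_mul V)
  refine ge_of_tendsto hlim (Filter.eventually_atTop.2 ⟨1, fun m hm => ?_⟩)
  have hm0 : (m : ℝ) ≠ 0 := by positivity
  refine norm_integral_exp_mul_le_of_partition hN hg hg1 hint (t := fun j => j / m)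
    (fun i j hij => by dsimp only; gcongr) (by simp) (div_self hm0) fun j _ => le_of_eq ?_
  push_cast
  ring

theorem norm_integral_exp_mul_add_le {φ : ℝ → ℝ} (hφ : BoundedVariationOn φ (Icc 0 1))
    (hφ1 : φ 1 = φ 0) {n k : ℤ} (hn : n ≠ 0) (hk : k ≠ 0) :
    ‖∫ v in (0 : ℝ)..1, Complex.exp (2 * π * Complex.I * n * ↑((k : ℝ) * v + φ v))‖
      ≤ (eVariationOn φ (Icc 0 1)).toReal / |(k : ℝ)| := by
  set g : ℝ → ℂ := fun v => Complex.exp (↑(2 * π * n * φ v) * Complex.I) with hg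
  have hφm : AEStronglyMeasurable φ (volume.restrict (Ι 0 1)) :=
    (BoundedVariationOn.intervalIntegrable (by rwa [uIcc_of_le zero_le_one])).def'
      |>.aestronglyMeasurable
  have hg_int : IntervalIntegrable g volume 0 1 :=
    intervalIntegrable_iff.2 <| IntegrableOn.of_bound (by simp) (by fun_prop) 1 <|
      ae_of_all _ fun v => by simp [hg, Complex.norm_exp]
  have hg_var :
      eVariationOn g (Icc 0 1) ≤ ‖2 * π * (n : ℝ)‖₊ * eVariationOn φ (Icc 0 1) :=
    (lipschitzWith_exp_mul_I (2 * π * n)).lipschitzOnWith.comp_eVariationOn_le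
      (mapsTo_univ φ (Icc 0 1))
  have hφV : eVariationOn φ (Icc 0 1) ≠ ⊤ := hφ
  have hg_bv : BoundedVariationOn g (Icc 0 1) :=
    ne_top_of_le_ne_top (ENNReal.mul_ne_top ENNReal.coe_ne_top hφV) hg_var
  have hg_var' : (eVariationOn g (Icc 0 1)).toReal
      ≤ 2 * π * |(n : ℝ)| * (eVariationOn φ (Icc 0 1)).toReal := by
    simpa [abs_of_pos pi_pos] using
      ENNReal.toReal_mono (ENNReal.mul_ne_top ENNReal.coe_ne_top hφV) hg_var
  have hsplit : (fun v : ℝ => Complex.exp (2 * π * Complex.I * n * ↑((k : ℝ) * v + φ v)))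
      = fun v : ℝ => Complex.exp (2 * π * Complex.I * ((n * k : ℤ) : ℂ) * v) * g v := by
    funext v
    rw [hg, ← Complex.exp_add]
    push_cast
    ring_nf
  have hnk : 0 < 2 * π * |(n : ℝ)| := by positivity
  rw [hsplit]
  calc _ ≤ (eVariationOn g (Icc 0 1)).toReal / (2 * π * |((n * k : ℤ) : ℝ)|) :=
        norm_integral_exp_mul_le_eVariationOn (mul_ne_zero hn hk) hg_bv
          (by simp only [hg, hφ1]) hg_int
    _ ≤ 2 * π * |(n : ℝ)| * (eVariationOn φ (Icc 0 1)).toReal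
          / (2 * π * |(n : ℝ)| * |(k : ℝ)|) := by
        push_cast
        rw [abs_mul, ← mul_assoc]
        gcongr
    _ = (eVariationOn φ (Icc 0 1)).toReal / |(k : ℝ)| := mul_div_mul_left _ _ hnk.ne'

theorem oscillatory_average_BV_bound_general (f φ : ℝ → ℝ) (a : ℤ → ℂ)
    (ha_sum : Summable fun n : ℤ => ‖a n‖)
    (ha₀ : a 0 = 0)
    (hf_rep : ∀ v : ℝ, (f v : ℂ) =
      ∑' n : ℤ, a n * Complex.exp (2 * π * Complex.I * n * v))
    (hφ_per : Function.Periodic φ 1)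
    (hφ_bv : BoundedVariationOn φ (Set.Icc 0 1))
    (k : ℤ) (hk : k ≠ 0) :
    |∫ v in (0:ℝ)..1, f ((k : ℝ) * v + φ v)|
      ≤ (1 / |(k : ℝ)|) * (∑' n : ℤ, ‖a n‖) *
          (eVariationOn φ (Set.Icc 0 1)).toReal := by
  set F : ℤ → ℝ → ℂ := fun n v =>
    a n * Complex.exp (2 * π * Complex.I * n * ↑((k : ℝ) * v + φ v))
  have hφm : AEStronglyMeasurable φ (volume.restrict (Ι 0 1)) :=
    (BoundedVariationOn.intervalIntegrable (by rwa [uIcc_of_le zero_le_one])).def'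
      |>.aestronglyMeasurable
  have hF_norm : ∀ n v, ‖F n v‖ = ‖a n‖ := fun n v => by simp [F, Complex.norm_exp]
  have hsum : HasSum (fun n => ∫ v in (0 : ℝ)..1, F n v)
      (∫ v in (0 : ℝ)..1, (f ((k : ℝ) * v + φ v) : ℂ)) := by
    refine intervalIntegral.hasSum_integral_of_dominated_convergence (fun n _ => ‖a n‖)
      (fun n => by fun_prop) (fun n => ae_of_all _ fun v _ => (hF_norm n v).le)
      (ae_of_all _ fun _ _ => ha_sum) intervalIntegrable_const
      (ae_of_all _ fun v _ => ?_)
    rw [hf_rep]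
    exact (ha_sum.of_norm_bounded fun n => (hF_norm n v).le).hasSum
  have hmode : ∀ n, ‖∫ v in (0 : ℝ)..1, F n v‖
      ≤ ‖a n‖ * ((eVariationOn φ (Icc 0 1)).toReal / |(k : ℝ)|) := by
    intro n
    rcases eq_or_ne n 0 with rfl | hn
    · simp [F, ha₀]
    rw [intervalIntegral.integral_const_mul, norm_mul]
    gcongr
    exact norm_integral_exp_mul_add_le hφ_bv (by simpa using hφ_per 0) hn hk
  calc |∫ v in (0:ℝ)..1, f ((k : ℝ) * v + φ v)|
      = ‖∫ v in (0 : ℝ)..1, (f ((k : ℝ) * v + φ v) : ℂ)‖ := by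
        rw [intervalIntegral.integral_ofReal, Complex.norm_real, Real.norm_eq_abs]
    _ ≤ (∑' n : ℤ, ‖a n‖) * ((eVariationOn φ (Icc 0 1)).toReal / |(k : ℝ)|) := by
        rw [← hsum.tsum_eq]
        exact tsum_of_norm_bounded (ha_sum.hasSum.mul_right _) hmode
    _ = _ := by ring

/-- Lemma on oscillatory averages, BV case: if `f` is 1-periodic with
absolutely convergent Fourier series `f(v) = ∑_{n≠0} a_n e^{2πinv}` (mean zero) and `φ`
is 1-periodic of bounded variation, then
`|∫₀¹ f(kv + φ(v)) dv| ≤ (1/|k|) ‖f‖_{A(𝕋)} ‖φ‖_{TV}` for every `k ≠ 0`. -/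
theorem oscillatory_average_BV_bound (f φ : ℝ → ℝ) (a : ℤ → ℂ)
    (hf_per : Function.Periodic f 1)
    (ha_sum : Summable fun n : ℤ => ‖a n‖)
    (ha₀ : a 0 = 0)
    (hf_rep : ∀ v : ℝ, (f v : ℂ) =
      ∑' n : ℤ, a n * Complex.exp (2 * π * Complex.I * n * v))
    (hφ_per : Function.Periodic φ 1)
    (hφ_bv : BoundedVariationOn φ (Set.Icc 0 1))
    (k : ℤ) (hk : k ≠ 0) :
    |∫ v in (0:ℝ)..1, f ((k : ℝ) * v + φ v)|
      ≤ (1 / |(k : ℝ)|) * (∑' n : ℤ, ‖a n‖) *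
          (eVariationOn φ (Set.Icc 0 1)).toReal :=
  oscillatory_average_BV_bound_general f φ a ha_sum ha₀ hf_rep hφ_per hφ_bv k hk
end
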